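/- arXiv:0911.3856 — 6 statements merged into one kernel-verified Lean document; each statement's English description precedes it below -/
import Mathlib

section
/- Let ε : ℝ → ℝ be a nonincreasing nonnegative function, γ > 1, τ > 0, H ∈ (0,1), and set x_k = τ·γ^k for k ∈ ℤ. Then for all σ ≥ 0 and c > 0, ∑_{k=−∞}^{∞} ε((σ + c·x_k)/x_k^H) ≤ (1/(H(1−H)·log γ)) · ∫_z^∞ ε(x)/x dx, where z = c^H·σ^(1−H)/γ^(H(1−H)). -/
/-!
In the coordinate `t = log x` the integral becomes `∫_{log z}^∞ φ` with `φ = ε ∘ exp` antitone,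
and the `k`-th summand is `ε (e^{u_k} + e^{v_k}) ≤ φ (max u_k v_k)`, where `u_k = log (σ x_k^{-H})`
decreases by `H δ` and `v_k = log (c x_k^{1-H})` increases by `(1-H) δ` per step (`δ = log γ`),
while `(1-H) u_k + H v_k = log z + H (1-H) δ` stays constant. Clipping both sequences at
`w = log z`, the steps `(max w u_{k+1}, max w u_k]` and `(max w v_{k-1}, max w v_k]` form two
families of disjoint intervals in `(w, ∞)`, and the constant weighted sum forces
`(1-H)·(first length) + H·(second length) ≥ H (1-H) δ`, so `H (1-H) δ · φ (max u_k v_k)` is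
bounded by the weighted integrals of `φ` over the two steps; summing over `k` gives the claim as
an inequality of lower Lebesgue integrals. To read it for the Bochner integral, summability of
the series must imply integrability: for large `k` the summand dominates `φ (log 2 + v_k)`,
which samples `φ` along an arithmetic progression. For `σ = 0` only `v_k` remains, and the steps
`(v_{k-1}, v_k]` tile the whole line.
-/

open Set MeasureTheory Real
open scoped ENNReal Function

theorem Real.div_rpow_eq_exp {σ x : ℝ} (hσ : 0 < σ) (hx : 0 < x) (H : ℝ) :
    σ / x ^ H = exp (log σ - H * log x) := by
  rw [exp_sub, exp_log hσ, rpow_def_of_pos hx, mul_comm]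

theorem Real.mul_div_rpow_eq_exp {c x : ℝ} (hc : 0 < c) (hx : 0 < x) (H : ℝ) :
    c * x / x ^ H = exp (log c + (1 - H) * log x) := by
  rw [exp_add, exp_log hc, mul_comm (1 - H), ← rpow_def_of_pos hx, rpow_sub hx, rpow_one,
    mul_div_assoc]

theorem Real.log_mul_zpow {τ γ : ℝ} (hτ : 0 < τ) (hγ : 0 < γ) (k : ℤ) :
    log (τ * γ ^ k) = log τ + k * log γ := by
  rw [log_mul hτ.ne' (zpow_pos hγ k).ne', log_zpow]

theorem mul_mul_le_max_sub_max_add_max_sub_max {H δ u v w : ℝ} (hH0 : 0 ≤ H) (hH1 : H ≤ 1)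
    (hδ : 0 ≤ δ) (hbal : (1 - H) * u + H * v = w + H * (1 - H) * δ) :
    H * (1 - H) * δ ≤ (1 - H) * (max w u - max w (u - H * δ))
      + H * (max w v - max w (v - (1 - H) * δ)) := by
  have hu : max w (u - H * δ) ≤ max w u := max_le_max le_rfl (by nlinarith)
  have hv : max w (v - (1 - H) * δ) ≤ max w v := max_le_max le_rfl (by nlinarith)
  rcases le_or_gt w (u - H * δ) with h1 | h1
  · rw [max_eq_right h1, max_eq_right (by nlinarith : w ≤ u)]
    nlinarith
  rcases le_or_gt w (v - (1 - H) * δ) with h2 | h2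
  · rw [max_eq_right h2, max_eq_right (by nlinarith : w ≤ v)]
    nlinarith
  rw [max_eq_left h1.le, max_eq_left h2.le]
  nlinarith [le_max_right w u, le_max_right w v]

theorem Ioi_subset_iUnion_Ioc_add_nat_mul {a η : ℝ} (hη : 0 < η) :
    Ioi a ⊆ ⋃ n : ℕ, Ioc (a + n * η) (a + n * η + η) := by
  intro x hx
  obtain ⟨m, hm⟩ := mem_iUnion.1 ((iUnion_Ioc_add_zsmul hη a).symm ▸ mem_univ x)
  rw [zsmul_eq_mul, zsmul_eq_mul] at hm
  have hm0 : 0 ≤ m := by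
    have : (0 : ℝ) < (m + 1) * η := by push_cast at hm; linarith [hm.2, mem_Ioi.1 hx]
    have : (-1 : ℤ) < m := by exact_mod_cast (by nlinarith : (-1 : ℝ) < m)
    omega
  lift m to ℕ using hm0
  exact mem_iUnion.2 ⟨m, by push_cast at hm; constructor <;> linarith [hm.1, hm.2]⟩

theorem MeasureTheory.tsum_setLIntegral_le_setLIntegral {α ι : Type*} [MeasurableSpace α]
    [Countable ι] {μ : Measure α} {f : α → ℝ≥0∞} {S : ι → Set α} {s : Set α}
    (hS : ∀ i, MeasurableSet (S i)) (hd : Pairwise (Disjoint on S)) (hsub : ∀ i, S i ⊆ s) :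
    ∑' i, ∫⁻ x in S i, f x ∂μ ≤ ∫⁻ x in s, f x ∂μ := by
  rw [← lintegral_iUnion hS hd]
  exact lintegral_mono_set (iUnion_subset hsub)

theorem tsum_le_one_div_mul_integral {ι α : Type*} [MeasurableSpace α] {μ : Measure α}
    {F : ι → ℝ} {f : α → ℝ} {C : ℝ} (hF : ∀ i, 0 ≤ F i) (hf : 0 ≤ᵐ[μ] f) (hC : 0 < C)
    (hle : ∑' i, ENNReal.ofReal (F i) * ENNReal.ofReal C ≤ ∫⁻ x, ENNReal.ofReal (f x) ∂μ)
    (hint : Summable F → Integrable f μ) :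
    ∑' i, F i ≤ 1 / C * ∫ x, f x ∂μ := by
  by_cases hS : Summable F
  · rw [ENNReal.tsum_mul_right, ← ENNReal.ofReal_tsum_of_nonneg hF hS,
      ← ENNReal.ofReal_mul (tsum_nonneg hF), ← ofReal_integral_eq_lintegral_ofReal (hint hS) hf,
      ENNReal.ofReal_le_ofReal_iff (integral_nonneg_of_ae hf)] at hle
    rwa [one_div_mul_eq_div, le_div_iff₀ hC]
  · rw [tsum_eq_zero_of_not_summable hS]
    exact mul_nonneg (one_div_pos.2 hC).le (integral_nonneg_of_ae hf)

theorem setIntegral_image_exp_div_self {s : Set ℝ} (hs : MeasurableSet s) (ε : ℝ → ℝ) :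
    ∫ y in exp '' s, ε y / y = ∫ x in s, ε (exp x) := by
  rw [integral_image_eq_integral_abs_deriv_smul hs
    (fun x _ => (hasDerivAt_exp x).hasDerivWithinAt) exp_injective.injOn]
  refine setIntegral_congr_fun hs fun x _ => ?_
  simp only [abs_of_pos (exp_pos x), smul_eq_mul]
  field_simp

namespace Antitone

variable {φ : ℝ → ℝ}

theorem ofReal_mul_le_setLIntegral_Ioc (hφ : Antitone φ) (p q : ℝ) :
    ENNReal.ofReal (φ q) * ENNReal.ofReal (q - p) ≤ ∫⁻ x in Ioc p q, ENNReal.ofReal (φ x) := by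
  calc ENNReal.ofReal (φ q) * ENNReal.ofReal (q - p) = ∫⁻ _ in Ioc p q, ENNReal.ofReal (φ q) := by
        rw [setLIntegral_const, Real.volume_Ioc]
    _ ≤ _ := setLIntegral_mono' measurableSet_Ioc fun x hx => ENNReal.ofReal_le_ofReal (hφ hx.2)

theorem setLIntegral_Ioc_le_ofReal_mul (hφ : Antitone φ) (p q : ℝ) :
    ∫⁻ x in Ioc p q, ENNReal.ofReal (φ x) ≤ ENNReal.ofReal (φ p) * ENNReal.ofReal (q - p) := by
  calc ∫⁻ x in Ioc p q, ENNReal.ofReal (φ x) ≤ ∫⁻ _ in Ioc p q, ENNReal.ofReal (φ p) :=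
        setLIntegral_mono' measurableSet_Ioc fun x hx => ENNReal.ofReal_le_ofReal (hφ hx.1.le)
    _ = _ := by rw [setLIntegral_const, Real.volume_Ioc]

theorem tsum_ofReal_mul_le_lintegral (hφ : Antitone φ) {v : ℤ → ℝ} {η : ℝ} (hη : 0 ≤ η)
    (hv : ∀ k, v (k + 1) = v k + η) :
    ∑' k, ENNReal.ofReal (φ (v k)) * ENNReal.ofReal η ≤ ∫⁻ x, ENNReal.ofReal (φ x) := by
  have hmono : Monotone v := monotone_int_of_le_succ fun k => by linarith [hv k]
  have hstep : ∀ k, v k - v (Order.pred k) = η := fun k => by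
    have := hv (k - 1)
    rw [sub_add_cancel] at this
    rw [Order.pred_eq_sub_one]
    linarith
  calc ∑' k, ENNReal.ofReal (φ (v k)) * ENNReal.ofReal η
      ≤ ∑' k, ∫⁻ x in Ioc (v (Order.pred k)) (v k), ENNReal.ofReal (φ x) :=
        ENNReal.tsum_le_tsum fun k => hstep k ▸ hφ.ofReal_mul_le_setLIntegral_Ioc _ _
    _ ≤ ∫⁻ x in univ, ENNReal.ofReal (φ x) :=
        tsum_setLIntegral_le_setLIntegral (fun _ => measurableSet_Ioc)
          hmono.pairwise_disjoint_on_Ioc_pred fun _ => subset_univ _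
    _ = ∫⁻ x, ENNReal.ofReal (φ x) := setLIntegral_univ _

theorem ofReal_max_mul_le_add_setLIntegral (hφ : Antitone φ) (h0 : ∀ x, 0 ≤ φ x)
    {H δ u v w : ℝ} (hH0 : 0 ≤ H) (hH1 : H ≤ 1) (hδ : 0 ≤ δ)
    (hbal : (1 - H) * u + H * v = w + H * (1 - H) * δ) :
    ENNReal.ofReal (φ (max u v)) * ENNReal.ofReal (H * (1 - H) * δ)
      ≤ ENNReal.ofReal (1 - H) * (∫⁻ x in Ioc (max w (u - H * δ)) (max w u), ENNReal.ofReal (φ x))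
        + ENNReal.ofReal H *
          ∫⁻ x in Ioc (max w (v - (1 - H) * δ)) (max w v), ENNReal.ofReal (φ x) := by
  set g := φ (max u v)
  have hw : w ≤ max u v := by
    nlinarith [mul_le_mul_of_nonneg_left (le_max_left u v) (sub_nonneg.2 hH1),
      mul_le_mul_of_nonneg_left (le_max_right u v) hH0,
      mul_nonneg (mul_nonneg hH0 (sub_nonneg.2 hH1)) hδ]
  have hgu : g ≤ φ (max w u) := hφ (max_le hw (le_max_left _ _))
  have hgv : g ≤ φ (max w v) := hφ (max_le hw (le_max_right _ _))
  have hΔu : 0 ≤ max w u - max w (u - H * δ) :=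
    sub_nonneg.2 (max_le_max le_rfl (by nlinarith))
  have hΔv : 0 ≤ max w v - max w (v - (1 - H) * δ) :=
    sub_nonneg.2 (max_le_max le_rfl (by nlinarith))
  have hsteps := mul_le_mul_of_nonneg_left
    (mul_mul_le_max_sub_max_add_max_sub_max hH0 hH1 hδ hbal) (h0 (max u v))
  calc ENNReal.ofReal g * ENNReal.ofReal (H * (1 - H) * δ)
      = ENNReal.ofReal (g * (H * (1 - H) * δ)) := (ENNReal.ofReal_mul (h0 _)).symm
    _ ≤ ENNReal.ofReal ((1 - H) * (φ (max w u) * (max w u - max w (u - H * δ)))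
          + H * (φ (max w v) * (max w v - max w (v - (1 - H) * δ)))) := by
        refine ENNReal.ofReal_le_ofReal ?_
        nlinarith [mul_le_mul_of_nonneg_right hgu hΔu, mul_le_mul_of_nonneg_right hgv hΔv]
    _ = ENNReal.ofReal (1 - H) * (ENNReal.ofReal (φ (max w u))
            * ENNReal.ofReal (max w u - max w (u - H * δ)))
          + ENNReal.ofReal H * (ENNReal.ofReal (φ (max w v))
            * ENNReal.ofReal (max w v - max w (v - (1 - H) * δ))) := by
        rw [ENNReal.ofReal_add (by have := h0 (max w u); positivity)
            (by have := h0 (max w v); positivity),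
          ENNReal.ofReal_mul (by linarith), ENNReal.ofReal_mul (h0 _), ENNReal.ofReal_mul hH0,
          ENNReal.ofReal_mul (h0 _)]
    _ ≤ _ := by gcongr <;> exact hφ.ofReal_mul_le_setLIntegral_Ioc _ _

theorem tsum_ofReal_max_mul_le_setLIntegral (hφ : Antitone φ) (h0 : ∀ x, 0 ≤ φ x)
    {H δ w : ℝ} (hH0 : 0 ≤ H) (hH1 : H ≤ 1) (hδ : 0 ≤ δ) {u v : ℤ → ℝ}
    (hu : ∀ k, u (k + 1) = u k - H * δ) (hv : ∀ k, v (k + 1) = v k + (1 - H) * δ)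
    (hbal : ∀ k, (1 - H) * u k + H * v k = w + H * (1 - H) * δ) :
    ∑' k, ENNReal.ofReal (φ (max (u k) (v k))) * ENNReal.ofReal (H * (1 - H) * δ)
      ≤ ∫⁻ x in Ioi w, ENNReal.ofReal (φ x) := by
  set m : ℤ → ℝ := fun k => max w (u k)
  set n : ℤ → ℝ := fun k => max w (v k)
  have hm : Antitone m :=
    antitone_int_of_succ_le fun k => max_le_max le_rfl (by rw [hu]; nlinarith)
  have hn : Monotone n :=
    monotone_int_of_le_succ fun k => max_le_max le_rfl (by rw [hv]; nlinarith)
  have hvpred : ∀ k, v (Order.pred k) = v k - (1 - H) * δ := fun k => by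
    rw [Order.pred_eq_sub_one, eq_sub_iff_add_eq, ← hv, sub_add_cancel]
  calc ∑' k, ENNReal.ofReal (φ (max (u k) (v k))) * ENNReal.ofReal (H * (1 - H) * δ)
      ≤ ∑' k, (ENNReal.ofReal (1 - H) *
            (∫⁻ x in Ioc (m (Order.succ k)) (m k), ENNReal.ofReal (φ x))
          + ENNReal.ofReal H * ∫⁻ x in Ioc (n (Order.pred k)) (n k), ENNReal.ofReal (φ x)) :=
        ENNReal.tsum_le_tsum fun k => by
          simpa only [m, n, Order.succ_eq_add_one, hu, hvpred]
            using hφ.ofReal_max_mul_le_add_setLIntegral h0 hH0 hH1 hδ (hbal k)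
    _ ≤ ENNReal.ofReal (1 - H) * (∫⁻ x in Ioi w, ENNReal.ofReal (φ x))
        + ENNReal.ofReal H * ∫⁻ x in Ioi w, ENNReal.ofReal (φ x) := by
        rw [ENNReal.tsum_add, ENNReal.tsum_mul_left, ENNReal.tsum_mul_left]
        gcongr <;> refine tsum_setLIntegral_le_setLIntegral (fun _ => measurableSet_Ioc) ?_
          fun k x hx => lt_of_le_of_lt (le_max_left _ _) hx.1
        exacts [hm.pairwise_disjoint_on_Ioc_succ, hn.pairwise_disjoint_on_Ioc_pred]
    _ = ∫⁻ x in Ioi w, ENNReal.ofReal (φ x) := by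
        rw [← add_mul, ← ENNReal.ofReal_add (by linarith) hH0, sub_add_cancel,
          ENNReal.ofReal_one, one_mul]

theorem integrableOn_of_summable (hφ : Antitone φ) (h0 : ∀ x, 0 ≤ φ x) {ι : Type*}
    [Countable ι] {e : ι → ℝ} {η : ℝ} {s : Set ℝ} (hs : s ⊆ ⋃ i, Ioc (e i) (e i + η))
    (hsum : Summable fun i => φ (e i)) : IntegrableOn φ s := by
  refine ⟨hφ.measurable.aestronglyMeasurable,
    (hasFiniteIntegral_iff_ofReal (ae_of_all _ h0)).2 ?_⟩
  calc ∫⁻ x in s, ENNReal.ofReal (φ x)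
      ≤ ∫⁻ x in ⋃ i, Ioc (e i) (e i + η), ENNReal.ofReal (φ x) := lintegral_mono_set hs
    _ ≤ ∑' i, ∫⁻ x in Ioc (e i) (e i + η), ENNReal.ofReal (φ x) := lintegral_iUnion_le _ _
    _ ≤ ∑' i, ENNReal.ofReal (φ (e i)) * ENNReal.ofReal η :=
        ENNReal.tsum_le_tsum fun i => by
          simpa using hφ.setLIntegral_Ioc_le_ofReal_mul (e i) (e i + η)
    _ = ENNReal.ofReal (∑' i, φ (e i)) * ENNReal.ofReal η := by
        rw [ENNReal.tsum_mul_right, ENNReal.ofReal_tsum_of_nonneg (fun i => h0 _) hsum]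
    _ < ⊤ := ENNReal.mul_lt_top ENNReal.ofReal_lt_top ENNReal.ofReal_lt_top

theorem integrable_of_summable_int (hφ : Antitone φ) (h0 : ∀ x, 0 ≤ φ x) {a η : ℝ}
    (hη : 0 < η) (hsum : Summable fun k : ℤ => φ (a + k * η)) : Integrable φ := by
  rw [← integrableOn_univ]
  refine hφ.integrableOn_of_summable h0 (η := η) ?_ hsum
  simp [← iUnion_Ioc_add_zsmul hη a, zsmul_eq_mul, add_mul, add_assoc]

theorem integrableOn_Ioi_of_summable_nat (hφ : Antitone φ) (h0 : ∀ x, 0 ≤ φ x) {a η : ℝ}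
    (hη : 0 < η) (hsum : Summable fun n : ℕ => φ (a + n * η)) (w : ℝ) :
    IntegrableOn φ (Ioi w) := by
  refine IntegrableOn.mono_set ?_ (fun x hx => (le_or_gt x a).imp (fun h => ⟨hx, h⟩) id :
    Ioi w ⊆ Ioc w a ∪ Ioi a)
  exact ((hφ.locallyIntegrable.integrableOn_isCompact isCompact_Icc).mono_set
    Ioc_subset_Icc_self).union
    (hφ.integrableOn_of_summable h0 (Ioi_subset_iUnion_Ioc_add_nat_mul hη) hsum)

end Antitone

theorem tsum_le_setIntegral_div_self_of_pos {ε : ℝ → ℝ} (hmono : Antitone ε)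
    (hnonneg : ∀ x, 0 ≤ ε x) {γ τ H σ c : ℝ} (hγ : 1 < γ) (hτ : 0 < τ) (hH0 : 0 < H)
    (hH1 : H < 1) (hσ : 0 < σ) (hc : 0 < c) :
    ∑' k : ℤ, ε ((σ + c * (τ * γ ^ k)) / (τ * γ ^ k) ^ H)
      ≤ (1 / (H * (1 - H) * log γ)) *
        ∫ x in Ioi (c ^ H * σ ^ (1 - H) / γ ^ (H * (1 - H))), ε x / x := by
  have hγ0 : 0 < γ := one_pos.trans hγ
  have hδ : 0 < log γ := log_pos hγ
  have hφ : Antitone fun t => ε (exp t) := hmono.comp_monotone exp_monotone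
  set u : ℤ → ℝ := fun k => log σ - H * (log τ + k * log γ)
  set v : ℤ → ℝ := fun k => log c + (1 - H) * (log τ + k * log γ)
  set w := H * log c + (1 - H) * log σ - H * (1 - H) * log γ
  have hz : c ^ H * σ ^ (1 - H) / γ ^ (H * (1 - H)) = exp w := by
    rw [rpow_def_of_pos hc, rpow_def_of_pos hσ, rpow_def_of_pos hγ0, ← exp_add, ← exp_sub]
    congr 1
    ring
  have hterm : ∀ k : ℤ, (σ + c * (τ * γ ^ k)) / (τ * γ ^ k) ^ H = exp (u k) + exp (v k) := by
    intro k
    have hx := mul_pos hτ (zpow_pos hγ0 k)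
    rw [add_div, div_rpow_eq_exp hσ hx, mul_div_rpow_eq_exp hc hx, log_mul_zpow hτ hγ0]
  simp_rw [hterm]
  rw [hz, ← image_exp_Ioi, setIntegral_image_exp_div_self measurableSet_Ioi]
  refine tsum_le_one_div_mul_integral (fun k => hnonneg _) (ae_of_all _ fun x => hnonneg _)
    (by positivity) ?_ ?_
  · calc ∑' k, ENNReal.ofReal (ε (exp (u k) + exp (v k))) * ENNReal.ofReal (H * (1 - H) * log γ)
        ≤ ∑' k, ENNReal.ofReal (ε (exp (max (u k) (v k))))
            * ENNReal.ofReal (H * (1 - H) * log γ) :=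
          ENNReal.tsum_le_tsum fun k => by
            gcongr
            exact hmono (exp_monotone.map_max ▸ max_le_add_of_nonneg (exp_pos _).le (exp_pos _).le)
      _ ≤ _ := hφ.tsum_ofReal_max_mul_le_setLIntegral (fun x => hnonneg _) hH0.le hH1.le hδ.le
          (fun k => by simp only [u]; push_cast; ring) (fun k => by simp only [v]; push_cast; ring)
          (fun k => by ring)
  · intro hS
    set j := ⌈(log σ - log c - log τ) / log γ⌉
    refine hφ.integrableOn_Ioi_of_summable_nat (fun x => hnonneg _) (a := log 2 + v j)
      (η := (1 - H) * log γ) (by nlinarith) ?_ w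
    refine .of_nonneg_of_le (fun n => hnonneg _) (fun n => hmono ?_)
      (hS.comp_injective ((add_right_injective j).comp Nat.cast_injective))
    -- from index `j` on the `v`-term dominates, so the summand is at least `ε (2 exp (v k))`
    have hj : log σ - log c - log τ ≤ ((j + n : ℤ) : ℝ) * log γ := by
      rw [← div_le_iff₀ hδ]
      exact (Int.le_ceil _).trans (by exact_mod_cast (by omega : j ≤ j + n))
    have huv : u (j + n) ≤ v (j + n) := by simp only [u, v]; nlinarith
    have hv : log 2 + v j + n * ((1 - H) * log γ) = log 2 + v (j + n) := by
      simp only [v]; push_cast; ring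
    show exp (u (j + n)) + exp (v (j + n)) ≤ _
    rw [hv, exp_add (log 2), exp_log two_pos, two_mul]
    exact add_le_add_left (exp_le_exp.2 huv) _

theorem tsum_le_setIntegral_div_self_of_zero {ε : ℝ → ℝ} (hmono : Antitone ε)
    (hnonneg : ∀ x, 0 ≤ ε x) {γ τ H c : ℝ} (hγ : 1 < γ) (hτ : 0 < τ) (hH0 : 0 < H)
    (hH1 : H < 1) (hc : 0 < c) :
    ∑' k : ℤ, ε ((0 + c * (τ * γ ^ k)) / (τ * γ ^ k) ^ H)
      ≤ (1 / (H * (1 - H) * log γ)) *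
        ∫ x in Ioi (c ^ H * 0 ^ (1 - H) / γ ^ (H * (1 - H))), ε x / x := by
  have hγ0 : 0 < γ := one_pos.trans hγ
  have hδ : 0 < log γ := log_pos hγ
  have hφ : Antitone fun t => ε (exp t) := hmono.comp_monotone exp_monotone
  set v : ℤ → ℝ := fun k => log c + (1 - H) * (log τ + k * log γ)
  have hterm : ∀ k : ℤ, (0 + c * (τ * γ ^ k)) / (τ * γ ^ k) ^ H = exp (v k) := by
    intro k
    have hx := mul_pos hτ (zpow_pos hγ0 k)
    rw [zero_add, mul_div_rpow_eq_exp hc hx, log_mul_zpow hτ hγ0]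
  simp_rw [hterm]
  rw [zero_rpow (by linarith), mul_zero, zero_div, ← range_exp, ← image_univ,
    setIntegral_image_exp_div_self MeasurableSet.univ, Measure.restrict_univ]
  refine tsum_le_one_div_mul_integral (fun k => hnonneg _) (ae_of_all _ fun x => hnonneg _)
    (by positivity) ?_ ?_
  · calc ∑' k, ENNReal.ofReal (ε (exp (v k))) * ENNReal.ofReal (H * (1 - H) * log γ)
        ≤ ∑' k, ENNReal.ofReal (ε (exp (v k))) * ENNReal.ofReal ((1 - H) * log γ) :=
          ENNReal.tsum_le_tsum fun k => by gcongr; nlinarith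
      _ ≤ _ := hφ.tsum_ofReal_mul_le_lintegral (by nlinarith) fun k => by
          simp only [v]; push_cast; ring
  · intro hS
    refine hφ.integrable_of_summable_int (fun x => hnonneg _) (a := v 0)
      (η := (1 - H) * log γ) (by nlinarith) ?_
    convert hS using 4 with k
    simp only [v]
    push_cast
    ring

theorem stmt_5 (ε : ℝ → ℝ) (hmono : Antitone ε) (hnonneg : ∀ x, 0 ≤ ε x)
    (γ τ H : ℝ) (hγ : 1 < γ) (hτ : 0 < τ) (hH0 : 0 < H) (hH1 : H < 1)
    (σ c : ℝ) (hσ : 0 ≤ σ) (hc : 0 < c) :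
    ∑' k : ℤ, ε ((σ + c * (τ * γ ^ k)) / (τ * γ ^ k) ^ H)
      ≤ (1 / (H * (1 - H) * Real.log γ)) *
        ∫ x in Set.Ioi (c ^ H * σ ^ (1 - H) / γ ^ (H * (1 - H))), ε x / x := by
  rcases hσ.eq_or_lt with rfl | hσ
  · exact tsum_le_setIntegral_div_self_of_zero hmono hnonneg hγ hτ hH0 hH1 hc
  · exact tsum_le_setIntegral_div_self_of_pos hmono hnonneg hγ hτ hH0 hH1 hσ hc
end

section
/- Let ε be a nonincreasing nonnegative function, γ > 1, τ > 0, and define y₀ = 0, y_k = τ + γ·y_{k−1} for k ≥ 1 (so y_k = τ(γ^k − 1)/(γ−1)). Then for every c > 0 and σ ≥ cτ/(γ−1), ∑_{k=1}^∞ ε(σ + c·y_k) ≤ (1/log γ)·( ε(z)·log(((γ−1)/(cτ))·z) + ∫_z^∞ ε(x)/x dx ) with z = σ + cτ. -/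
/-!
Put `A = cτ/(γ-1)` and `x k = σ + c y (k+1) = (σ - A) + A γ^(k+1)`, so that `x 0 = z`,
`x (k+1) ≤ γ x k` (this is where `σ ≥ A` enters) and `x k ≥ A γ^(k+1)`. Since `ε` is
antitone, `∫_{x k}^{x (k+1)} ε t / t ≥ ε (x (k+1)) log (x (k+1) / x k)`, and the defect
`log γ - log (x (k+1) / x k) ≥ 0` is charged to `ε z`. Summed, the defects telescope to
`(N+1) log γ - log (x N / z) ≤ log (z / A) - log γ`. The reverse comparison
`∫_{x k}^{x (k+1)} ε t / t ≤ ε (x k) log γ` shows that `ε t / t` is integrable on `(z, ∞)` as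
soon as the series converges.
-/

open MeasureTheory Set Filter Real Finset

theorem pos_of_mem_uIcc_of_pos {a b t : ℝ} (ha : 0 < a) (hb : 0 < b) (ht : t ∈ uIcc a b) :
    0 < t :=
  lt_min ha hb |>.trans_le ht.1

namespace Antitone

variable {f : ℝ → ℝ}

theorem intervalIntegrable_div_self (hf : Antitone f) {a b : ℝ} (ha : 0 < a) (hb : 0 < b) :
    IntervalIntegrable (fun t => f t / t) volume a b := by
  simp only [div_eq_mul_inv]
  exact hf.intervalIntegrable.mul_continuousOn
    (continuousOn_id.inv₀ fun _ ht => (pos_of_mem_uIcc_of_pos ha hb ht).ne')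

theorem mul_log_div_le_integral_div_self (hf : Antitone f) {a b : ℝ} (ha : 0 < a) (hab : a ≤ b) :
    f b * log (b / a) ≤ ∫ t in a..b, f t / t := by
  have hb := ha.trans_le hab
  rw [← integral_inv_of_pos ha hb, ← intervalIntegral.integral_const_mul]
  refine intervalIntegral.integral_mono_on hab
    ((intervalIntegral.intervalIntegrable_inv (fun _ ht => (pos_of_mem_uIcc_of_pos ha hb ht).ne')
      continuousOn_id).const_mul _) (hf.intervalIntegrable_div_self ha hb) fun t ht => ?_
  rw [div_eq_mul_inv]
  exact mul_le_mul_of_nonneg_right (hf ht.2) (inv_nonneg.2 (ha.le.trans ht.1))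

theorem integral_div_self_le_mul_log_div (hf : Antitone f) {a b : ℝ} (ha : 0 < a) (hab : a ≤ b) :
    ∫ t in a..b, f t / t ≤ f a * log (b / a) := by
  have hb := ha.trans_le hab
  rw [← integral_inv_of_pos ha hb, ← intervalIntegral.integral_const_mul]
  refine intervalIntegral.integral_mono_on hab (hf.intervalIntegrable_div_self ha hb)
    ((intervalIntegral.intervalIntegrable_inv (fun _ ht => (pos_of_mem_uIcc_of_pos ha hb ht).ne')
      continuousOn_id).const_mul _) fun t ht => ?_
  rw [div_eq_mul_inv]
  exact mul_le_mul_of_nonneg_right (hf ht.1) (inv_nonneg.2 (ha.le.trans ht.1))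

theorem mul_log_le_integral_div_self_add (hf : Antitone f) {a b c γ : ℝ} (ha : 0 < a)
    (hab : a ≤ b) (hbγ : b ≤ γ * a) (hcb : c ≤ b) :
    f b * log γ ≤ (∫ t in a..b, f t / t) + f c * (log γ - (log b - log a)) := by
  have hb := ha.trans_le hab
  have hlog : log b - log a ≤ log γ := by
    rw [← log_div hb.ne' ha.ne']
    exact log_le_log (div_pos hb ha) ((div_le_iff₀ ha).2 hbγ)
  have hint := hf.mul_log_div_le_integral_div_self ha hab
  rw [log_div hb.ne' ha.ne'] at hint
  nlinarith [mul_le_mul_of_nonneg_right (hf hcb) (sub_nonneg.2 hlog)]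

variable {x : ℕ → ℝ} {γ : ℝ}

theorem sum_range_succ_mul_log_le (hf : Antitone f) (hx : Monotone x) (hx0 : 0 < x 0)
    (hxγ : ∀ k, x (k + 1) ≤ γ * x k) (N : ℕ) :
    (∑ k ∈ range (N + 1), f (x k)) * log γ ≤
      (∫ t in x 0..x N, f t / t) + f (x 0) * ((N + 1) * log γ - (log (x N) - log (x 0))) := by
  have hpos : ∀ k, 0 < x k := fun k => hx0.trans_le (hx (Nat.zero_le k))
  induction N with
  | zero => simp
  | succ N ih =>
    have hstep := hf.mul_log_le_integral_div_self_add (hpos N) (hx N.le_succ) (hxγ N)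
      (hx (Nat.zero_le (N + 1)))
    rw [sum_range_succ, ← intervalIntegral.integral_add_adjacent_intervals
      (hf.intervalIntegrable_div_self (hpos 0) (hpos N))
      (hf.intervalIntegrable_div_self (hpos N) (hpos (N + 1)))]
    push_cast
    linarith

theorem integral_div_self_le_sum_range_mul_log (hf : Antitone f) (hf0 : ∀ t, 0 ≤ f t)
    (hx : Monotone x) (hx0 : 0 < x 0) (hxγ : ∀ k, x (k + 1) ≤ γ * x k) (N : ℕ) :
    ∫ t in x 0..x N, f t / t ≤ (∑ k ∈ range N, f (x k)) * log γ := by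
  have hpos : ∀ k, 0 < x k := fun k => hx0.trans_le (hx (Nat.zero_le k))
  induction N with
  | zero => simp
  | succ N ih =>
    have hstep : ∫ t in x N..x (N + 1), f t / t ≤ f (x N) * log γ :=
      (hf.integral_div_self_le_mul_log_div (hpos N) (hx N.le_succ)).trans <|
        mul_le_mul_of_nonneg_left (log_le_log (div_pos (hpos (N + 1)) (hpos N))
          ((div_le_iff₀ (hpos N)).2 (hxγ N))) (hf0 _)
    rw [sum_range_succ, ← intervalIntegral.integral_add_adjacent_intervals
      (hf.intervalIntegrable_div_self (hpos 0) (hpos N))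
      (hf.intervalIntegrable_div_self (hpos N) (hpos (N + 1)))]
    linarith

theorem integrableOn_Ioi_div_self_of_summable (hf : Antitone f) (hf0 : ∀ t, 0 ≤ f t)
    (hx : Monotone x) (hx0 : 0 < x 0) (hxγ : ∀ k, x (k + 1) ≤ γ * x k)
    (hxtop : Tendsto x atTop atTop) (hs : Summable fun k => f (x k)) :
    IntegrableOn (fun t => f t / t) (Ioi (x 0)) := by
  have hpos : ∀ k, 0 < x k := fun k => hx0.trans_le (hx (Nat.zero_le k))
  have hγ : 1 ≤ γ := le_of_mul_le_mul_right (by simpa using (hx (Nat.zero_le 1)).trans (hxγ 0)) hx0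
  refine integrableOn_Ioi_of_intervalIntegral_norm_bounded ((∑' k, f (x k)) * log γ) (x 0)
    (fun N => (hf.intervalIntegrable_div_self (hpos 0) (hpos N)).1) hxtop
    (Eventually.of_forall fun N => ?_)
  calc ∫ t in x 0..x N, ‖f t / t‖ = ∫ t in x 0..x N, f t / t := by
        refine intervalIntegral.integral_congr fun t ht => norm_of_nonneg ?_
        exact div_nonneg (hf0 t) (pos_of_mem_uIcc_of_pos (hpos 0) (hpos N) ht).le
    _ ≤ (∑ k ∈ range N, f (x k)) * log γ :=
        hf.integral_div_self_le_sum_range_mul_log hf0 hx hx0 hxγ N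
    _ ≤ (∑' k, f (x k)) * log γ :=
        mul_le_mul_of_nonneg_right (hs.sum_le_tsum _ fun k _ => hf0 _) (log_nonneg hγ)

theorem tsum_le_integral_div_self_of_geometric (hf : Antitone f) (hf0 : ∀ t, 0 ≤ f t)
    (hγ : 1 < γ) {A : ℝ} (hA : 0 < A) (hx : Monotone x) (hxγ : ∀ k, x (k + 1) ≤ γ * x k)
    (hAx : ∀ k, A * γ ^ (k + 1) ≤ x k) :
    ∑' k, f (x k) ≤ (1 / log γ) * (f (x 0) * log (x 0 / A) + ∫ t in Ioi (x 0), f t / t) := by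
  have hlogγ : 0 < log γ := log_pos hγ
  have hAx0 : A ≤ x 0 := (le_mul_of_one_le_right hA.le hγ.le).trans (by simpa using hAx 0)
  have hx0 : 0 < x 0 := hA.trans_le hAx0
  have hRHS : 0 ≤ f (x 0) * log (x 0 / A) + ∫ t in Ioi (x 0), f t / t :=
    add_nonneg (mul_nonneg (hf0 _) (log_nonneg ((one_le_div hA).2 hAx0)))
      (setIntegral_nonneg measurableSet_Ioi fun t ht => div_nonneg (hf0 t) (hx0.trans ht).le)
  by_cases hs : Summable fun k => f (x k)
  swap
  · rw [tsum_eq_zero_of_not_summable hs]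
    exact mul_nonneg (one_div_pos.2 hlogγ).le hRHS
  have hxtop : Tendsto x atTop atTop :=
    tendsto_atTop_mono hAx <| ((tendsto_pow_atTop_atTop_of_one_lt hγ).comp
      (tendsto_add_atTop_nat 1)).const_mul_atTop hA
  have hint := hf.integrableOn_Ioi_div_self_of_summable hf0 hx hx0 hxγ hxtop hs
  refine Real.tsum_le_of_sum_range_le (fun k => hf0 _) fun N => ?_
  rw [one_div, inv_mul_eq_div, le_div_iff₀ hlogγ]
  have hlog : log A + (N + 1) * log γ ≤ log (x N) := by
    have := log_le_log (by positivity) (hAx N)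
    rwa [log_mul hA.ne' (by positivity), log_pow, Nat.cast_succ] at this
  have hI : ∫ t in x 0..x N, f t / t ≤ ∫ t in Ioi (x 0), f t / t := by
    rw [intervalIntegral.integral_of_le (hx (Nat.zero_le N))]
    refine setIntegral_mono_set hint ?_ Ioc_subset_Ioi_self.eventuallyLE
    filter_upwards [ae_restrict_mem measurableSet_Ioi] with t ht
    exact div_nonneg (hf0 t) (hx0.trans ht).le
  calc (∑ k ∈ range N, f (x k)) * log γ ≤ (∑ k ∈ range (N + 1), f (x k)) * log γ := by
        gcongr
        · exact fun k _ _ => hf0 _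
        · exact N.le_succ
    _ ≤ (∫ t in x 0..x N, f t / t) + f (x 0) * ((N + 1) * log γ - (log (x N) - log (x 0))) :=
        hf.sum_range_succ_mul_log_le hx hx0 hxγ N
    _ ≤ f (x 0) * log (x 0 / A) + ∫ t in Ioi (x 0), f t / t := by
        rw [log_div hx0.ne' hA.ne']
        nlinarith [mul_le_mul_of_nonneg_left (show (N + 1) * log γ - (log (x N) - log (x 0)) ≤
          log (x 0) - log A by linarith) (hf0 (x 0))]

end Antitone

theorem eq_geom_of_affine_rec {γ τ : ℝ} (hγ : γ ≠ 1) {y : ℕ → ℝ} (hy0 : y 0 = 0)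
    (hyrec : ∀ k, y (k + 1) = τ + γ * y k) (k : ℕ) :
    y k = τ * (γ ^ k - 1) / (γ - 1) := by
  have hγ1 : γ - 1 ≠ 0 := sub_ne_zero.2 hγ
  induction k with
  | zero => simp [hy0]
  | succ k ih =>
    rw [hyrec, ih]
    field_simp
    ring

theorem stmt_6 (ε : ℝ → ℝ) (hmono : Antitone ε) (hnonneg : ∀ x, 0 ≤ ε x)
    (γ τ c σ : ℝ) (hγ : 1 < γ) (hτ : 0 < τ) (hc : 0 < c)
    (y : ℕ → ℝ) (hy0 : y 0 = 0) (hyrec : ∀ k, y (k + 1) = τ + γ * y k)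
    (hσ : c * τ / (γ - 1) ≤ σ) :
    ∑' k : ℕ, ε (σ + c * y (k + 1))
      ≤ (1 / Real.log γ) *
        (ε (σ + c * τ) * Real.log ((γ - 1) / (c * τ) * (σ + c * τ))
          + ∫ x in Set.Ioi (σ + c * τ), ε x / x) := by
  have hγ1 : 0 < γ - 1 := sub_pos.2 hγ
  set A := c * τ / (γ - 1) with hA_def
  have hA : 0 < A := by positivity
  have hx : ∀ k, σ + c * y (k + 1) = σ - A + A * γ ^ (k + 1) := fun k => by
    rw [eq_geom_of_affine_rec hγ.ne' hy0 hyrec, hA_def]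
    ring
  have key := hmono.tsum_le_integral_div_self_of_geometric hnonneg hγ hA
    (x := fun k => σ + c * y (k + 1))
    (monotone_nat_of_le_succ fun k => by
      simp only [hx]
      gcongr
      exacts [hγ.le, k.le_succ])
    (fun k => by
      simp only [hx, pow_succ γ (k + 1)]
      nlinarith [mul_nonneg hγ1.le (sub_nonneg.2 hσ)])
    (fun k => by simp only [hx]; linarith)
  have hx0 : σ + c * y (0 + 1) = σ + c * τ := by rw [hyrec, hy0, mul_zero, add_zero]
  have hz : (σ + c * τ) / A = (γ - 1) / (c * τ) * (σ + c * τ) := by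
    rw [hA_def]
    field_simp
  rwa [hx0, hz] at key
end

section
/- Special case of the geometric-sequence sum bound: if ε is nonincreasing nonnegative, γ > 1, and σ ≥ 1, then ∑_{k=1}^∞ ε(σ + γ^k − 1) ≤ (1/log γ)·( ε(z)·log z + ∫_z^∞ ε(x)/x dx ) where z = σ + γ − 1. -/
/-!
Cut `(1, ∞)` into the blocks `(γ ^ k, γ ^ (k + 1)]`, each of measure `log γ` for `dx / x`.
On the `k`-th block `ε (max x z) ≥ ε (σ + γ ^ (k + 1) - 1)`, because `σ ≥ 1` puts the sample
point above both `γ ^ (k + 1)` and `z`. So `log γ` times the series is at most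
`∫_1^∞ ε (max x z) / x dx = ε z log z + ∫_z^∞ ε x / x dx`. These computations are done in
`ℝ≥0∞`. To return to real integrals we also need `ε x / x` to be integrable on `(z, ∞)` when
the series converges. This follows from the reverse comparison on the blocks
`(a k, a (k + 1)]` with `a k = σ + γ ^ (k + 1) - 1`: `σ ≥ 1` again gives
`a (k + 1) ≤ γ * a k`, so each block has measure at most `log γ`.
-/

open MeasureTheory Set Real Filter
open scoped ENNReal
open ENNReal (ofReal)

lemma lintegral_Ioc_ofReal_div (B : ℝ) {c d : ℝ} (hc : 0 < c) (hcd : c ≤ d) :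
    ∫⁻ x in Ioc c d, ofReal (B / x) = ofReal B * ofReal (log (d / c)) := by
  have hpos : ∀ x ∈ Ioc c d, 0 < x := fun x hx => hc.trans hx.1
  have hinv : ∫⁻ x in Ioc c d, ofReal x⁻¹ = ofReal (log (d / c)) := by
    have hint : IntervalIntegrable (fun x : ℝ => x⁻¹) volume c d :=
      intervalIntegral.intervalIntegrable_inv
        (fun x hx => by rw [uIcc_of_le hcd] at hx; exact (hc.trans_le hx.1).ne') continuousOn_id
    rw [← ofReal_integral_eq_lintegral_ofReal
        ((intervalIntegrable_iff_integrableOn_Ioc_of_le hcd).1 hint)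
        ((ae_restrict_iff' measurableSet_Ioc).2 <|
          ae_of_all _ fun x hx => (inv_pos.2 (hpos x hx)).le),
      ← intervalIntegral.integral_of_le hcd, integral_inv_of_pos hc (hc.trans_le hcd)]
  calc ∫⁻ x in Ioc c d, ofReal (B / x)
      = ∫⁻ x in Ioc c d, ofReal B * ofReal x⁻¹ :=
        setLIntegral_congr_fun measurableSet_Ioc fun x hx => by
          rw [div_eq_mul_inv, ENNReal.ofReal_mul' (inv_pos.2 (hpos x hx)).le]
    _ = _ := by rw [lintegral_const_mul' _ _ ENNReal.ofReal_ne_top, hinv]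

lemma lintegral_Ioi_eq_tsum_lintegral_Ioc {a : ℕ → ℝ} (ha : Monotone a)
    (hunb : ¬BddAbove (range a)) (g : ℝ → ℝ≥0∞) :
    ∫⁻ x in Ioi (a 0), g x = ∑' k, ∫⁻ x in Ioc (a k) (a (k + 1)), g x := by
  have hcover : ⋃ k, Ioc (a k) (a (k + 1)) = Ioi (a 0) := by
    simpa using iUnion_Ioc_map_succ_eq_Ioi (fun k => ha bot_le) hunb
  rw [← hcover, lintegral_iUnion (fun _ => measurableSet_Ioc)]
  simpa using ha.pairwise_disjoint_on_Ioc_succ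

namespace Antitone

variable {f : ℝ → ℝ}

lemma ofReal_mul_log_le_lintegral_Ioc (hf : Antitone f) {c d : ℝ} (hc : 0 < c) (hcd : c ≤ d) :
    ofReal (f d) * ofReal (log (d / c)) ≤ ∫⁻ x in Ioc c d, ofReal (f x / x) := by
  rw [← lintegral_Ioc_ofReal_div _ hc hcd]
  exact setLIntegral_mono' measurableSet_Ioc fun x hx => ENNReal.ofReal_le_ofReal <|
    div_le_div_of_nonneg_right (hf hx.2) (hc.trans hx.1).le

lemma lintegral_Ioc_le_ofReal_mul_log (hf : Antitone f) {c d : ℝ} (hc : 0 < c) (hcd : c ≤ d) :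
    ∫⁻ x in Ioc c d, ofReal (f x / x) ≤ ofReal (f c) * ofReal (log (d / c)) := by
  rw [← lintegral_Ioc_ofReal_div _ hc hcd]
  exact setLIntegral_mono' measurableSet_Ioc fun x hx => ENNReal.ofReal_le_ofReal <|
    div_le_div_of_nonneg_right (hf hx.1.le) (hc.trans hx.1).le

lemma tsum_ofReal_mul_log_le_lintegral_Ioi_one (hf : Antitone f) {γ : ℝ} (hγ : 1 < γ) :
    (∑' k : ℕ, ofReal (f (γ ^ (k + 1)))) * ofReal (log γ)
      ≤ ∫⁻ x in Ioi 1, ofReal (f x / x) := by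
  have hpow : Monotone (γ ^ · : ℕ → ℝ) := fun _ _ => pow_le_pow_right₀ hγ.le
  have hunb : ¬BddAbove (range (γ ^ · : ℕ → ℝ)) :=
    not_bddAbove_of_tendsto_atTop (tendsto_pow_atTop_atTop_of_one_lt hγ)
  simpa only [pow_zero] using calc
    (∑' k : ℕ, ofReal (f (γ ^ (k + 1)))) * ofReal (log γ)
      = ∑' k : ℕ, ofReal (f (γ ^ (k + 1))) * ofReal (log (γ ^ (k + 1) / γ ^ k)) := by
        rw [← ENNReal.tsum_mul_right]
        congr! with k
        rw [pow_succ, mul_div_cancel_left₀ _ (pow_pos (by linarith) k).ne']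
    _ ≤ ∑' k, ∫⁻ x in Ioc (γ ^ k) (γ ^ (k + 1)), ofReal (f x / x) :=
        ENNReal.tsum_le_tsum fun k =>
          hf.ofReal_mul_log_le_lintegral_Ioc (pow_pos (by linarith) k) (hpow k.le_succ)
    _ = ∫⁻ x in Ioi (γ ^ 0), ofReal (f x / x) :=
        (lintegral_Ioi_eq_tsum_lintegral_Ioc hpow hunb _).symm

lemma lintegral_Ioi_le_tsum_ofReal_mul_log (hf : Antitone f) {a : ℕ → ℝ} (ha : Monotone a)
    (ha0 : 0 < a 0) (hunb : ¬BddAbove (range a)) {γ : ℝ}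
    (hratio : ∀ k, a (k + 1) ≤ γ * a k) :
    ∫⁻ x in Ioi (a 0), ofReal (f x / x) ≤ (∑' k, ofReal (f (a k))) * ofReal (log γ) := by
  have hpos : ∀ k, 0 < a k := fun k => ha0.trans_le (ha k.zero_le)
  rw [lintegral_Ioi_eq_tsum_lintegral_Ioc ha hunb, ← ENNReal.tsum_mul_right]
  refine ENNReal.tsum_le_tsum fun k =>
    (hf.lintegral_Ioc_le_ofReal_mul_log (hpos k) (ha k.le_succ)).trans ?_
  gcongr _ * ofReal ?_
  exact log_le_log (div_pos (hpos _) (hpos k)) ((div_le_iff₀ (hpos k)).2 (hratio k))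

end Antitone

lemma lintegral_Ioi_one_ofReal_max_div (ε : ℝ → ℝ) {z : ℝ} (hz : 1 ≤ z) :
    ∫⁻ x in Ioi 1, ofReal (ε (max x z) / x)
      = ofReal (ε z) * ofReal (log z) + ∫⁻ x in Ioi z, ofReal (ε x / x) := by
  rw [← Ioc_union_Ioi_eq_Ioi hz, lintegral_union measurableSet_Ioi Ioc_disjoint_Ioi_same,
    setLIntegral_congr_fun (g := fun x => ofReal (ε z / x)) measurableSet_Ioc
      fun x hx => by rw [max_eq_right hx.2],
    setLIntegral_congr_fun (g := fun x => ofReal (ε x / x)) measurableSet_Ioi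
      fun x hx => by rw [max_eq_left (le_of_lt hx)],
    lintegral_Ioc_ofReal_div _ one_pos hz, div_one]

/-- The upper bound `hge` is what makes `∫ g` finite when the series converges; when it
diverges, its `tsum` is the junk value `0`. -/
lemma tsum_mul_le_add_integral_of_lintegral_le {α : Type*} [MeasurableSpace α] {μ : Measure α}
    {u : ℕ → ℝ} (hu : ∀ k, 0 ≤ u k) {g : α → ℝ} (hg : 0 ≤ᵐ[μ] g)
    (hgm : AEStronglyMeasurable g μ) {c R : ℝ} (hR : 0 ≤ R)
    (hle : (∑' k, ofReal (u k)) * ofReal c ≤ ofReal R + ∫⁻ x, ofReal (g x) ∂μ)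
    (hge : ∫⁻ x, ofReal (g x) ∂μ ≤ (∑' k, ofReal (u k)) * ofReal c) :
    (∑' k, u k) * c ≤ R + ∫ x, g x ∂μ := by
  have hRI : 0 ≤ R + ∫ x, g x ∂μ := add_nonneg hR (integral_nonneg_of_ae hg)
  by_cases hs : Summable u
  · rw [← ENNReal.ofReal_tsum_of_nonneg hu hs, ← ENNReal.ofReal_mul (tsum_nonneg hu)] at hle hge
    have hfin : ∫⁻ x, ofReal (g x) ∂μ ≠ ⊤ := ne_top_of_le_ne_top ENNReal.ofReal_ne_top hge
    rw [← ENNReal.ofReal_toReal hfin, ← integral_eq_lintegral_of_nonneg_ae hg hgm,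
      ← ENNReal.ofReal_add hR (integral_nonneg_of_ae hg)] at hle
    exact (ENNReal.ofReal_le_ofReal_iff hRI).1 hle
  · rwa [tsum_eq_zero_of_not_summable hs, zero_mul]

theorem stmt_7 (ε : ℝ → ℝ) (hmono : Antitone ε) (hnonneg : ∀ x, 0 ≤ ε x)
    (γ σ : ℝ) (hγ : 1 < γ) (hσ : 1 ≤ σ) :
    ∑' k : ℕ, ε (σ + γ ^ (k + 1) - 1)
      ≤ (1 / Real.log γ) * (ε (σ + γ - 1) * Real.log (σ + γ - 1)
          + ∫ x in Set.Ioi (σ + γ - 1), ε x / x) := by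
  set z := σ + γ - 1
  set a : ℕ → ℝ := fun k => σ + γ ^ (k + 1) - 1
  have hz : 1 ≤ z := by linarith
  have hpow_le_a : ∀ k, γ ^ (k + 1) ≤ a k := fun k => by simp only [a]; linarith
  have hz_le_a : ∀ k, z ≤ a k := fun k => by
    simp only [a, z]; linarith [le_self_pow₀ hγ.le (by omega : k + 1 ≠ 0)]
  have ha : Monotone a := fun m n h => by
    simp only [a]; linarith [pow_le_pow_right₀ hγ.le (by omega : m + 1 ≤ n + 1)]
  have hunb : ¬BddAbove (range a) := not_bddAbove_of_tendsto_atTop <|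
    tendsto_atTop_mono hpow_le_a <|
      (tendsto_pow_atTop_atTop_of_one_lt hγ).comp (tendsto_add_atTop_nat 1)
  -- `γ * a k - a (k + 1) = (γ - 1) * (σ - 1)`
  have hratio : ∀ k, a (k + 1) ≤ γ * a k := fun k => by
    simp only [a]; rw [pow_succ γ (k + 1)]
    linarith [mul_nonneg (sub_nonneg.2 hγ.le) (sub_nonneg.2 hσ)]
  have hupper : (∑' k, ofReal (ε (a k))) * ofReal (log γ)
      ≤ ofReal (ε z * log z) + ∫⁻ x in Ioi z, ofReal (ε x / x) := calc
    _ ≤ (∑' k : ℕ, ofReal (ε (max (γ ^ (k + 1)) z))) * ofReal (log γ) := by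
        gcongr with k
        exact hmono (max_le (hpow_le_a k) (hz_le_a k))
    _ ≤ ∫⁻ x in Ioi 1, ofReal (ε (max x z) / x) :=
        Antitone.tsum_ofReal_mul_log_le_lintegral_Ioi_one
          (hmono.comp_monotone (monotone_id.max monotone_const)) hγ
    _ = _ := by rw [lintegral_Ioi_one_ofReal_max_div ε hz, ENNReal.ofReal_mul (hnonneg z)]
  have hlower := hmono.lintegral_Ioi_le_tsum_ofReal_mul_log ha (by linarith [hz_le_a 0]) hunb hratio
  rw [show a 0 = z by simp [a, z]] at hlower
  have hint_nonneg : 0 ≤ᵐ[volume.restrict (Ioi z)] fun x => ε x / x :=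
    (ae_restrict_iff' measurableSet_Ioi).2 <| ae_of_all _ fun x hx =>
      div_nonneg (hnonneg x) (by linarith [mem_Ioi.1 hx])
  rw [one_div, inv_mul_eq_div, le_div_iff₀ (log_pos hγ)]
  exact tsum_mul_le_add_integral_of_lintegral_le (fun k => hnonneg _) hint_nonneg
    (hmono.measurable.div measurable_id).aestronglyMeasurable
    (mul_nonneg (hnonneg z) (log_nonneg hz)) hupper hlower
end

section
/- (Concatenation discretization inequality) Let A₂ be nondecreasing, R₂ > 0, σ ≥ 0, τ > 0, γ' > 1, and define y₀ = 0, y_k = τ + γ'·y_{k−1}. Then inf_{s ≤ t}{ A₂(s) + max(R₂(t−s) − σ, 0) } ≥ inf_{k ≥ 1, y_k ≤ t or y_k ≥ t}{ A₂(t − y_k) + max( (R₂/γ')·y_k − (σ + (R₂/γ')·τ), 0 ) }, where A₂ is extended by A₂(s) = A₂(0) for s < 0. -/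
/-!
Cut the delays at the points `0 = y₀ < y₁ < ⋯`, which grow at least linearly and hence exhaust
`[0, ∞)`. If `y_{n} ≤ t - s < y_{n+1}`, the term for `k = n + 1` is below the term for `s`:
monotonicity of `A₂` handles the first summand, and `(R₂/γ')·y_{n+1} - (σ + (R₂/γ')·τ) = R₂·y_n - σ`
by the recursion handles the second.
-/

lemma nat_mul_le_of_succ_eq_add_mul {y : ℕ → ℝ} {τ γ : ℝ} (hτ : 0 ≤ τ) (hγ : 1 ≤ γ)
    (h0 : 0 ≤ y 0) (hrec : ∀ k, y (k + 1) = τ + γ * y k) (k : ℕ) : k * τ ≤ y k := by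
  induction k with
  | zero => simpa using h0
  | succ k ih =>
    have hyk : 0 ≤ y k := (mul_nonneg k.cast_nonneg hτ).trans ih
    rw [hrec]
    push_cast
    nlinarith

lemma exists_le_lt_succ_of_exists_lt {y : ℕ → ℝ} {x : ℝ} (h0 : y 0 ≤ x) (hx : ∃ m, x < y m) :
    ∃ n, y n ≤ x ∧ x < y (n + 1) := by
  by_contra! h
  obtain ⟨m, hm⟩ := hx
  have hle : ∀ n, y n ≤ x := fun n => Nat.rec h0 h n
  exact (hle m).not_gt hm

lemma bddBelow_range_monotone_max_add_max {ι : Type*} {f : ℝ → ℝ} (hf : Monotone f)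
    (g h : ι → ℝ) : BddBelow (Set.range fun i => f (max (g i) 0) + max (h i) 0) := by
  refine ⟨f 0, ?_⟩
  rintro _ ⟨i, rfl⟩
  have := hf (le_max_right (g i) 0)
  linarith [le_max_right (h i) 0]

lemma add_max_sub_le_of_le_le {A : ℝ → ℝ} (hA : Monotone A) {R σ τ γ a s t : ℝ} (hR : 0 ≤ R)
    (hγ : γ ≠ 0) (hs : 0 ≤ s) (hlo : a ≤ t - s) (hhi : t - s ≤ τ + γ * a) :
    A (max (t - (τ + γ * a)) 0) + max (R / γ * (τ + γ * a) - (σ + R / γ * τ)) 0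
      ≤ A s + max (R * (t - s) - σ) 0 := by
  have hrate : R / γ * (τ + γ * a) - (σ + R / γ * τ) = R * a - σ := by
    field_simp
    ring
  rw [hrate]
  gcongr
  exact hA (max_le (by linarith) hs)

theorem stmt_15_general (A₂ : ℝ → ℝ) (hA : Monotone A₂) (R₂ σ τ γ' t : ℝ)
    (hR : 0 < R₂) (hτ : 0 < τ) (hγ : 1 < γ') (ht : 0 ≤ t)
    (y : ℕ → ℝ) (hy0 : y 0 = 0) (hyrec : ∀ k, y (k + 1) = τ + γ' * y k) :
    (⨅ k : {k : ℕ // 1 ≤ k}, (A₂ (max (t - y (k : ℕ)) 0)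
        + max (R₂ / γ' * y (k : ℕ) - (σ + R₂ / γ' * τ)) 0))
      ≤ ⨅ s : Set.Icc (0 : ℝ) t, (A₂ (s : ℝ) + max (R₂ * (t - (s : ℝ)) - σ) 0) := by
  have : Nonempty (Set.Icc (0 : ℝ) t) := ⟨⟨0, le_rfl, ht⟩⟩
  refine le_ciInf fun ⟨s, hs0, hst⟩ => ?_
  have hunbdd : ∃ m, t - s < y m := by
    obtain ⟨m, hm⟩ := exists_nat_gt ((t - s) / τ)
    refine ⟨m, lt_of_lt_of_le ?_ (nat_mul_le_of_succ_eq_add_mul hτ.le hγ.le hy0.ge hyrec m)⟩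
    rwa [div_lt_iff₀ hτ] at hm
  obtain ⟨n, hlo, hhi⟩ := exists_le_lt_succ_of_exists_lt (by linarith) hunbdd
  refine ciInf_le_of_le (bddBelow_range_monotone_max_add_max hA _ _) ⟨n + 1, by omega⟩ ?_
  rw [hyrec] at hhi ⊢
  exact add_max_sub_le_of_le_le hA hR.le (by linarith) hs0 hlo hhi.le

theorem stmt_15 (A₂ : ℝ → ℝ) (hA : Monotone A₂) (R₂ σ τ γ' t : ℝ)
    (hR : 0 < R₂) (hσ : 0 ≤ σ) (hτ : 0 < τ) (hγ : 1 < γ') (ht : 0 ≤ t)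
    (y : ℕ → ℝ) (hy0 : y 0 = 0) (hyrec : ∀ k, y (k + 1) = τ + γ' * y k) :
    (⨅ k : {k : ℕ // 1 ≤ k}, (A₂ (max (t - y (k : ℕ)) 0)
        + max (R₂ / γ' * y (k : ℕ) - (σ + R₂ / γ' * τ)) 0))
      ≤ ⨅ s : Set.Icc (0 : ℝ) t, (A₂ (s : ℝ) + max (R₂ * (t - (s : ℝ)) - σ) 0) :=
  stmt_15_general A₂ hA R₂ σ τ γ' t hR hτ hγ ht y hy0 hyrec
end

section
/- (Gaussian sample path envelope) Assume P(A(s,t) > r(t−s) + σ(t−s)^H) ≤ K·e^{−(1/2)(σ/b)²} for all s ≤ t, σ > 0, with K > 0, b > 0, H ∈ (0,1). Then for any μ > 0 and all t, σ > 0: P( sup_{s≤t}{ A(s,t) − (r+μ)(t−s) } > σ ) ≤ L·e^{−(σ/c)^β}, where β = 2(1−H), c = (2b/μ^H)^{1/(1−H)}, and L = e·max{1, 4^H·K·(r/μ + 2 − H)/(H(1−H))}. -/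
/-
Sample the supremum on the geometric grid `s_k = t - d_k`, `d_k = t / γ ^ k`. If the path exceeds
`σ + (r + μ) (t - s)` at some `s` with `d_{k+1} ≤ t - s ≤ d_k`, monotonicity of `A` and
`(r + 3μ/4) γ ≤ r + μ` make the increment over `[s_k, t]` exceed `r d_k + τ_k d_k ^ H` with
`τ_k = (σ + 3μ d_k / 4) / d_k ^ H`, so the union bound with the Gaussian envelope applies.
With `x_k = 3μ d_k / (4σ)`, `τ_k` is proportional to `x_k ^ (-H) + x_k ^ (1 - H)`, which is at
least `exp (θ |log x_k|)` for `θ = min H (1 - H)`, and `log x_k` drops by `log γ` per step. After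
`e ^ y ≥ 1 + y` the series is dominated by a two-sided geometric series
`e ^ (-Z) ∑ₖ e ^ (-v |k₀ - k|)` with `Z = 2 (3/4) ^ (2H) (σ / c) ^ β`. The choice of `γ` makes
`v = θ F / (2C)` independent of `σ` (`F = 2 (3/4) ^ (2H)`, `C = r/μ + 2 - H`), and what remains
is the numerical inequality `8 ≤ 4 ^ H F e ^ F`.
-/

open MeasureTheory Real Set

theorem div_rpow_one_div_rpow_two_mul {x y p : ℝ} (hx : 0 ≤ x) (hy : 0 ≤ y) (hp : p ≠ 0) :
    (x / y ^ (1 / p)) ^ (2 * p) = (x ^ p / y) ^ 2 := by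
  rw [mul_comm, rpow_mul (by positivity), rpow_two, div_rpow hx (by positivity), ← rpow_mul hy,
    one_div_mul_cancel hp, rpow_one]

theorem mul_exp_le_of_le_mul_one_sub {c c' u : ℝ} (hc : 0 ≤ c) (h : c' ≤ c * (1 - u)) :
    c' * exp u ≤ c := by
  have h' : c' ≤ c * exp (-u) :=
    h.trans (mul_le_mul_of_nonneg_left (by linarith [add_one_le_exp (-u)]) hc)
  calc c' * exp u ≤ c * exp (-u) * exp u := mul_le_mul_of_nonneg_right h' (exp_pos u).le
    _ = c := by rw [mul_assoc, ← exp_add, neg_add_cancel, exp_zero, mul_one]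

theorem add_three_quarters_mul_exp_le {r μ C X : ℝ} (hr : 0 ≤ r) (hμ : 0 < μ)
    (hC : r / μ + 1 ≤ C) (hX : 1 < X) :
    (r + 3 / 4 * μ) * exp (1 / (4 * C * X)) ≤ r + μ := by
  have hC0 : 0 < C := by linarith [div_nonneg hr hμ.le]
  have hX0 : 0 < X := by linarith
  have hμC : r + μ ≤ μ * C := by
    have := mul_le_mul_of_nonneg_left hC hμ.le
    rwa [mul_add, mul_div_cancel₀ _ hμ.ne', mul_one] at this
  have hu : (r + μ) * (1 / (4 * C * X)) ≤ μ / 4 := by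
    rw [mul_one_div, div_le_div_iff₀ (by positivity) four_pos]; nlinarith
  exact mul_exp_le_of_le_mul_one_sub (by linarith) (by linarith)

theorem not_lt_iSup_Icc_self {a : ℝ → ℝ} {c σ t : ℝ} (hσ : 0 < σ) :
    ¬ σ < ⨆ s : Icc t t, (a t - a s - c * (t - s)) := by
  intro h
  have : Nonempty (Icc t t) := ⟨⟨t, left_mem_Icc.mpr le_rfl⟩⟩
  obtain ⟨⟨s, hts, hst⟩, hs⟩ := exists_lt_of_lt_ciSup h
  obtain rfl : s = t := le_antisymm hst hts
  simp only [sub_self, mul_zero] at hs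
  linarith

theorem exists_geometric_grid_lt_of_lt_iSup {a : ℝ → ℝ} (ha : Monotone a) {c c' γ σ t : ℝ}
    (hc : 0 ≤ c) (hγ : 1 < γ) (hγc : c' * γ ≤ c) (hσ : 0 < σ) (ht : 0 ≤ t)
    (h : σ < ⨆ s : Icc (0 : ℝ) t, (a t - a s - c * (t - s))) :
    ∃ k : ℕ, σ + c' * (t / γ ^ k) < a t - a (t - t / γ ^ k) := by
  have : Nonempty (Icc (0 : ℝ) t) := ⟨⟨0, left_mem_Icc.mpr ht⟩⟩
  obtain ⟨⟨s, _, hst⟩, hs⟩ := exists_lt_of_lt_ciSup h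
  have hts : 0 < t - s := by
    rcases hst.lt_or_eq with hlt | rfl
    · linarith
    · simp only [sub_self, mul_zero] at hs; linarith
  obtain ⟨k, hk, hk1⟩ := exists_nat_pow_near ((one_le_div hts).mpr (by linarith : t - s ≤ t)) hγ
  have hγk : 0 < γ ^ k := pow_pos (by linarith) k
  set d := t / γ ^ k
  have hd : 0 < d := div_pos (by linarith) hγk
  have hdk : t - s ≤ d := by
    rw [le_div_iff₀ hγk, mul_comm]; rwa [le_div_iff₀ hts] at hk
  have hdk1 : d < γ * (t - s) := by
    rw [div_lt_iff₀ hγk]; rw [div_lt_iff₀ hts, pow_succ] at hk1; linarith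
  have hslope : c' * d ≤ c * (t - s) := by
    refine le_of_mul_le_mul_right ?_ (by linarith : 0 < γ)
    calc c' * d * γ = c' * γ * d := by ring
      _ ≤ c * d := mul_le_mul_of_nonneg_right hγc hd.le
      _ ≤ c * (γ * (t - s)) := mul_le_mul_of_nonneg_left hdk1.le hc
      _ = c * (t - s) * γ := by ring
  refine ⟨k, ?_⟩
  have := ha (show t - d ≤ s by linarith)
  linarith

theorem measureReal_le_tsum_of_subset_iUnion {Ω : Type*} [MeasurableSpace Ω] {P : Measure Ω}
    [IsFiniteMeasure P] {S : Set Ω} {E : ℕ → Set Ω} {f : ℕ → ℝ} (hS : S ⊆ ⋃ k, E k)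
    (hE : ∀ k, P.real (E k) ≤ f k) (hf : Summable f) : P.real S ≤ ∑' k, f k := by
  have hf0 : ∀ k, 0 ≤ f k := fun k => measureReal_nonneg.trans (hE k)
  apply ENNReal.toReal_le_of_le_ofReal (tsum_nonneg hf0)
  calc P S ≤ P (⋃ k, E k) := measure_mono hS
    _ ≤ ∑' k, P (E k) := measure_iUnion_le E
    _ ≤ ∑' k, ENNReal.ofReal (f k) := ENNReal.tsum_le_tsum fun k => by
        rw [← ofReal_measureReal]; exact ENNReal.ofReal_le_ofReal (hE k)
    _ = ENNReal.ofReal (∑' k, f k) := (ENNReal.ofReal_tsum_of_nonneg hf0 hf).symm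

theorem measureReal_lt_iSup_le_tsum {Ω : Type*} [MeasurableSpace Ω] (P : Measure Ω)
    [IsFiniteMeasure P] (A : ℝ → Ω → ℝ) (hmono : ∀ ω, Monotone fun t => A t ω)
    {r K b H a μ γ t σ : ℝ}
    (henv : ∀ s, 0 ≤ s → s ≤ t → ∀ τ, 0 < τ →
      P.real {ω | A t ω - A s ω > r * (t - s) + τ * (t - s) ^ H} ≤ K * exp (-(1 / 2) * (τ / b) ^ 2))
    (ha : 0 ≤ a) (hrμ : 0 ≤ r + μ) (hγ : 1 < γ) (hγa : (r + a) * γ ≤ r + μ) (ht : 0 < t)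
    (hσ : 0 < σ) {f : ℕ → ℝ} (hf : Summable f)
    (hterm : ∀ k : ℕ,
      K * exp (-(1 / 2) * ((σ + a * (t / γ ^ k)) / (t / γ ^ k) ^ H / b) ^ 2) ≤ f k) :
    P.real {ω | σ < ⨆ s : Icc (0 : ℝ) t, (A t ω - A s ω - (r + μ) * (t - s))} ≤ ∑' k, f k := by
  have hd : ∀ k : ℕ, 0 < t / γ ^ k := fun k => div_pos ht (pow_pos (by linarith) k)
  have hdt : ∀ k : ℕ, t / γ ^ k ≤ t := fun k => div_le_self ht.le (one_le_pow₀ hγ.le)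
  refine measureReal_le_tsum_of_subset_iUnion (fun ω hω => ?_)
    (fun k => (henv _ (sub_nonneg.mpr (hdt k)) (sub_le_self _ (hd k).le) _
      (div_pos (by nlinarith [hd k]) (rpow_pos_of_pos (hd k) H))).trans (hterm k)) hf
  obtain ⟨k, hk⟩ := exists_geometric_grid_lt_of_lt_iSup (hmono ω) hrμ hγ hγa hσ ht.le hω
  refine mem_iUnion.mpr ⟨k, ?_⟩
  rw [mem_ofPred_eq, sub_sub_cancel, div_mul_cancel₀ _ (rpow_pos_of_pos (hd k) H).ne']
  linarith

theorem exp_min_mul_abs_log_le {x H : ℝ} (hx : 0 < x) :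
    exp (min H (1 - H) * |log x|) ≤ x ^ (-H) + x ^ (1 - H) := by
  rw [rpow_def_of_pos hx, rpow_def_of_pos hx]
  rcases le_total 0 (log x) with hl | hl
  · have : min H (1 - H) * |log x| ≤ log x * (1 - H) := by
      rw [abs_of_nonneg hl]; nlinarith [min_le_right H (1 - H)]
    linarith [exp_le_exp.mpr this, exp_pos (log x * -H)]
  · have : min H (1 - H) * |log x| ≤ log x * -H := by
      rw [abs_of_nonpos hl]; nlinarith [min_le_left H (1 - H)]
    linarith [exp_le_exp.mpr this, exp_pos (log x * (1 - H))]

theorem add_mul_div_rpow_eq {σ a d : ℝ} (hσ : 0 < σ) (ha : 0 < a) (hd : 0 < d) (H : ℝ) :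
    (σ + a * d) / d ^ H = σ ^ (1 - H) * a ^ H * ((a * d / σ) ^ (-H) + (a * d / σ) ^ (1 - H)) := by
  have hx : 0 < a * d / σ := by positivity
  rw [rpow_sub hx, rpow_one, rpow_neg hx.le, div_rpow (by positivity) hσ.le, mul_rpow ha.le hd.le,
    rpow_sub hσ, rpow_one]
  field_simp [(rpow_pos_of_pos hσ H).ne', (rpow_pos_of_pos ha H).ne', (rpow_pos_of_pos hd H).ne']

theorem half_sq_mul_exp_le {σ a b d H : ℝ} (hσ : 0 < σ) (ha : 0 < a) (hd : 0 < d) :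
    1 / 2 * (σ ^ (1 - H) * a ^ H / b) ^ 2 * exp (2 * min H (1 - H) * |log (a * d / σ)|)
      ≤ 1 / 2 * ((σ + a * d) / d ^ H / b) ^ 2 := by
  have key := exp_min_mul_abs_log_le (H := H) (by positivity : 0 < a * d / σ)
  rw [add_mul_div_rpow_eq hσ ha hd, mul_assoc 2, two_mul, exp_add]
  calc _ ≤ 1 / 2 * (σ ^ (1 - H) * a ^ H / b) ^ 2 *
          ((a * d / σ) ^ (-H) + (a * d / σ) ^ (1 - H)) ^ 2 := by
        rw [sq ((a * d / σ) ^ (-H) + _)]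
        gcongr
    _ = _ := by ring

theorem exp_neg_half_sq_grid_le {σ a b t γ H : ℝ} (hσ : 0 < σ) (ha : 0 < a) (ht : 0 < t)
    (hγ : 1 < γ) (k : ℕ) :
    exp (-(1 / 2) * ((σ + a * (t / γ ^ k)) / (t / γ ^ k) ^ H / b) ^ 2)
      ≤ exp (-(1 / 2 * (σ ^ (1 - H) * a ^ H / b) ^ 2)) *
        exp (-(2 * min H (1 - H) * (1 / 2 * (σ ^ (1 - H) * a ^ H / b) ^ 2) * log γ *
          |log (a * t / σ) / log γ - k|)) := by
  set Z := 1 / 2 * (σ ^ (1 - H) * a ^ H / b) ^ 2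
  have hlogγ : 0 < log γ := log_pos hγ
  have hγk : 0 < γ ^ k := pow_pos (by linarith) k
  have hlog : |log (a * (t / γ ^ k) / σ)| = log γ * |log (a * t / σ) / log γ - k| := by
    rw [show a * (t / γ ^ k) / σ = a * t / σ / γ ^ k by ring,
      log_div (by positivity) hγk.ne', log_pow, ← abs_of_pos hlogγ, ← abs_mul, abs_of_pos hlogγ]
    congr 1
    field_simp
  rw [← exp_add, exp_le_exp, neg_mul, ← neg_add, neg_le_neg_iff]
  calc Z + 2 * min H (1 - H) * Z * log γ * |log (a * t / σ) / log γ - k|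
      = Z * (2 * min H (1 - H) * |log (a * (t / γ ^ k) / σ)| + 1) := by rw [hlog]; ring
    _ ≤ Z * exp (2 * min H (1 - H) * |log (a * (t / γ ^ k) / σ)|) :=
        mul_le_mul_of_nonneg_left (add_one_le_exp _) (by positivity)
    _ ≤ _ := half_sq_mul_exp_le hσ ha (div_pos ht hγk)

theorem hasSum_pow_natAbs {q : ℝ} (hq0 : 0 ≤ q) (hq1 : q < 1) :
    HasSum (fun z : ℤ => q ^ z.natAbs) ((1 + q) / (1 - q)) := by
  have hpos : HasSum (fun n : ℕ => q ^ (n : ℤ).natAbs) (1 - q)⁻¹ := by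
    simpa only [Int.natAbs_natCast] using hasSum_geometric_of_lt_one hq0 hq1
  have hneg : HasSum (fun n : ℕ => q ^ (-((n : ℤ) + 1)).natAbs) (q * (1 - q)⁻¹) := by
    have habs (n : ℕ) : (-((n : ℤ) + 1)).natAbs = n + 1 := by omega
    simpa only [habs, pow_succ'] using (hasSum_geometric_of_lt_one hq0 hq1).mul_left q
  have hsum : (1 - q)⁻¹ + q * (1 - q)⁻¹ = (1 + q) / (1 - q) := by
    field_simp [(by linarith : (1 - q) ≠ 0)]
  exact hsum ▸ hpos.of_nat_of_neg_add_one hneg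

theorem tsum_exp_neg_mul_abs_sub_le {v : ℝ} (hv : 0 < v) (c : ℝ) :
    Summable (fun k : ℕ => exp (-(v * |c - k|))) ∧
      ∑' k : ℕ, exp (-(v * |c - k|)) ≤ 2 * exp (2 * v) / v := by
  set q := exp (-v)
  have hq1 : q < 1 := exp_lt_one_iff.mpr (by linarith)
  set n := ⌊c⌋
  -- `|z - n| ≤ |c - z| + 1` dominates the terms by a shifted two-sided geometric series
  have hmaj : ∀ z : ℤ, exp (-(v * |c - z|)) ≤ exp v * q ^ (z - n).natAbs := by
    intro z
    have hfl : |(z : ℝ) - n| ≤ |c - z| + 1 := by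
      have := Int.floor_le c
      have := Int.lt_floor_add_one c
      calc |(z : ℝ) - n| ≤ |(z : ℝ) - c| + |c - n| := abs_sub_le _ _ _
        _ ≤ |c - z| + 1 := by
          rw [abs_sub_comm]; gcongr; rw [abs_le]; constructor <;> linarith
    rw [← exp_nat_mul, ← exp_add, Nat.cast_natAbs, Int.cast_abs, Int.cast_sub]
    gcongr
    nlinarith
  have hgeom : HasSum (fun z : ℤ => exp v * q ^ (z - n).natAbs) (exp v * ((1 + q) / (1 - q))) :=
    ((Equiv.subRight n).hasSum_iff.mpr (hasSum_pow_natAbs (exp_pos _).le hq1)).mul_left _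
  have hsumZ : Summable (fun z : ℤ => exp (-(v * |c - z|))) :=
    hgeom.summable.of_nonneg_of_le (fun _ => (exp_pos _).le) hmaj
  have hinj : Function.Injective (Nat.cast : ℕ → ℤ) := Nat.cast_injective
  refine ⟨hsumZ.comp_injective hinj, ?_⟩
  have hq : v * q ≤ 1 - q := by
    have h := mul_le_mul_of_nonneg_right (add_one_le_exp v) (exp_pos (-v)).le
    rw [← exp_add, add_neg_cancel, exp_zero] at h
    linarith
  calc ∑' k : ℕ, exp (-(v * |c - k|))
      ≤ ∑' z : ℤ, exp (-(v * |c - z|)) :=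
        tsum_comp_le_tsum_of_inj hsumZ (fun _ => (exp_pos _).le) hinj
    _ ≤ exp v * ((1 + q) / (1 - q)) :=
        (hsumZ.tsum_le_tsum hmaj hgeom.summable).trans_eq hgeom.tsum_eq
    _ ≤ exp v * (2 / (v * q)) := by
      gcongr
      linarith
    _ = 2 * exp (2 * v) / v := by
      rw [show 2 * v = v + v by ring, exp_add]
      simp only [q, exp_neg]
      field_simp

theorem exp_two_thirds_lt_two : exp (2 / 3) < 2 := by
  have hcube : exp (2 / 3) ^ 3 = exp 1 ^ 2 := by rw [← exp_nat_mul, ← exp_nat_mul]; norm_num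
  have he := exp_one_lt_d9
  have : exp (2 / 3) ^ 3 < 2 ^ 3 := by rw [hcube]; nlinarith [exp_pos 1]
  exact lt_of_pow_lt_pow_left₀ 3 (by norm_num) this

theorem sixty_four_ninths_le_exp_two : 64 / 9 ≤ exp 2 := by
  have he := exp_one_gt_d9
  have : exp 2 = exp 1 ^ 2 := by rw [← exp_nat_mul]; norm_num
  rw [this]; nlinarith

theorem nine_eighths_le_two_mul_sq_rpow {H : ℝ} (hH1 : H ≤ 1) :
    9 / 8 ≤ 2 * ((3 / 4 : ℝ) ^ H) ^ 2 := by
  have : (3 / 4 : ℝ) ^ (1 : ℝ) ≤ (3 / 4) ^ H :=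
    rpow_le_rpow_of_exponent_ge (by norm_num) (by norm_num) hH1
  rw [rpow_one] at this
  nlinarith

theorem eight_le_four_rpow_mul_mul_exp {H : ℝ} (hH0 : 0 ≤ H) (hH1 : H ≤ 1) :
    8 ≤ 4 ^ H * (2 * ((3 / 4) ^ H) ^ 2) * exp (2 * ((3 / 4) ^ H) ^ 2) := by
  set F := 2 * ((3 / 4 : ℝ) ^ H) ^ 2
  have hF : 9 / 8 ≤ F := nine_eighths_le_two_mul_sq_rpow hH1
  have hFlin : 2 + 4 * H * log (3 / 4) ≤ F := by
    have h := add_one_le_exp (2 * H * log (3 / 4))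
    have : exp (2 * H * log (3 / 4)) = ((3 / 4 : ℝ) ^ H) ^ 2 := by
      rw [← rpow_natCast, ← rpow_mul (by norm_num), rpow_def_of_pos (by norm_num)]; ring_nf
    linarith
  -- `log 4 + 4 log (3/4) = log (81/64) ≥ 0` absorbs the linear loss in `F`
  have hlog : 0 ≤ log 4 + 4 * log (3 / 4) := by
    have : log 4 + 4 * log (3 / 4) = log (4 * (3 / 4) ^ 4) := by
      rw [log_mul (by norm_num) (by norm_num), log_pow]; norm_num
    rw [this]; exact log_nonneg (by norm_num)
  have hexp : exp 2 ≤ 4 ^ H * exp F := by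
    rw [rpow_def_of_pos (by norm_num), ← exp_add, exp_le_exp]; nlinarith
  calc (8 : ℝ) = 9 / 8 * (64 / 9) := by norm_num
    _ ≤ F * (4 ^ H * exp F) := by gcongr; exact sixty_four_ninths_le_exp_two.trans hexp
    _ = _ := by ring

theorem weibull_constant_bound {H C X K F v : ℝ} (hH0 : 0 < H) (hH1 : H < 1) (hC : 2 - H ≤ C)
    (hX : 1 < X) (hK : 0 ≤ K) (hF : F = 2 * ((3 / 4) ^ H) ^ 2)
    (hv : v = min H (1 - H) * F / (2 * C)) :
    K * exp (-(F * X)) * (2 * exp (2 * v) / v)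
      ≤ exp 1 * (4 ^ H * K * C / (H * (1 - H))) * exp (-X) := by
  set θ := min H (1 - H)
  have hθ : 0 < θ := lt_min hH0 (by linarith)
  have hθH : H * (1 - H) ≤ θ := by
    rw [← min_mul_max H (1 - H)]
    exact mul_le_of_le_one_right hθ.le (max_le hH1.le (by linarith))
  have hF1 : 9 / 8 ≤ F := hF ▸ nine_eighths_le_two_mul_sq_rpow hH1.le
  have hF2 : F ≤ 2 := by
    have : (3 / 4 : ℝ) ^ H ≤ 1 := rpow_le_one (by norm_num) (by norm_num) hH0.le
    have : 0 ≤ (3 / 4 : ℝ) ^ H := by positivity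
    nlinarith
  have hCpos : 0 < C := by linarith
  have hv0 : 0 < v := hv ▸ by positivity
  have hexpv : exp (2 * v) ≤ 2 := by
    have h3θ : 3 * θ ≤ C := by
      rcases le_total H (1 - H) with h | h
      · linarith [min_le_left H (1 - H)]
      · linarith [min_le_right H (1 - H)]
    have : v ≤ 1 / 3 := by
      rw [hv, div_le_iff₀ (by positivity)]; nlinarith
    exact (exp_le_exp.mpr (by linarith)).trans exp_two_thirds_lt_two.le
  -- `X > 1` and `F > 1` give `F X ≥ F + X - 1`
  have hexpFX : exp (-(F * X)) ≤ exp 1 * exp (-F) * exp (-X) := by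
    rw [← exp_add, ← exp_add, exp_le_exp]; nlinarith
  have h8 : 8 * exp (-F) ≤ 4 ^ H * F := by
    have := eight_le_four_rpow_mul_mul_exp hH0.le hH1.le
    rw [← hF] at this
    calc 8 * exp (-F) ≤ 4 ^ H * F * exp F * exp (-F) := by gcongr
      _ = 4 ^ H * F := by rw [mul_assoc, ← exp_add, add_neg_cancel, exp_zero, mul_one]
  calc K * exp (-(F * X)) * (2 * exp (2 * v) / v)
      ≤ K * (exp 1 * exp (-F) * exp (-X)) * (2 * 2 / v) := by gcongr
    _ = exp 1 * (K * C * (8 * exp (-F) / (θ * F))) * exp (-X) := by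
      rw [hv]; field_simp; ring
    _ ≤ exp 1 * (K * C * (4 ^ H / (H * (1 - H)))) * exp (-X) := by
      have key : 8 * exp (-F) / (θ * F) ≤ 4 ^ H / (H * (1 - H)) := by
        rw [div_le_div_iff₀ (by positivity) (by nlinarith)]
        calc 8 * exp (-F) * (H * (1 - H)) ≤ 4 ^ H * F * θ := by
              gcongr
          _ = 4 ^ H * (θ * F) := by ring
      gcongr
    _ = exp 1 * (4 ^ H * K * C / (H * (1 - H))) * exp (-X) := by ring

theorem measureReal_lt_iSup_le_weibull {Ω : Type*} [MeasurableSpace Ω] (P : Measure Ω)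
    [IsFiniteMeasure P] (A : ℝ → Ω → ℝ) (hmono : ∀ ω, Monotone fun t => A t ω)
    {r K b H μ t σ : ℝ} (hr : 0 ≤ r) (hK : 0 < K) (hH0 : 0 < H) (hH1 : H < 1)
    (henv : ∀ s, 0 ≤ s → s ≤ t → ∀ τ, 0 < τ →
      P.real {ω | A t ω - A s ω > r * (t - s) + τ * (t - s) ^ H} ≤ K * exp (-(1 / 2) * (τ / b) ^ 2))
    (hμ : 0 < μ) (ht : 0 < t) (hσ : 0 < σ) (hX : 1 < (σ ^ (1 - H) * μ ^ H / (2 * b)) ^ 2) :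
    P.real {ω | σ < ⨆ s : Icc (0 : ℝ) t, (A t ω - A s ω - (r + μ) * (t - s))}
      ≤ exp 1 * (4 ^ H * K * (r / μ + 2 - H) / (H * (1 - H))) *
        exp (-(σ ^ (1 - H) * μ ^ H / (2 * b)) ^ 2) := by
  set X := (σ ^ (1 - H) * μ ^ H / (2 * b)) ^ 2 with hXdef
  set C := r / μ + 2 - H with hCdef
  set F := 2 * ((3 / 4 : ℝ) ^ H) ^ 2 with hFdef
  set γ := exp (1 / (4 * C * X)) with hγdef
  set v := min H (1 - H) * F / (2 * C) with hvdef
  have hrμ : 0 ≤ r / μ := div_nonneg hr hμ.le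
  have hC0 : 0 < C := by linarith
  have hX0 : 0 < X := by linarith
  have hv0 : 0 < v := div_pos (mul_pos (lt_min hH0 (by linarith)) (by positivity)) (by positivity)
  have hZ : 1 / 2 * (σ ^ (1 - H) * (3 / 4 * μ) ^ H / b) ^ 2 = F * X := by
    rw [mul_rpow (by norm_num) hμ.le, hFdef, hXdef]; ring
  have hv : 2 * min H (1 - H) * (F * X) * log γ = v := by
    rw [hγdef, log_exp, hvdef]; field_simp; ring
  have hγ : 1 < γ := one_lt_exp_iff.mpr (by positivity)
  have hγa : (r + 3 / 4 * μ) * γ ≤ r + μ :=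
    add_three_quarters_mul_exp_le hr hμ (by linarith) hX
  clear_value X C F γ v
  obtain ⟨hsum, hle⟩ := tsum_exp_neg_mul_abs_sub_le hv0 (log (3 / 4 * μ * t / σ) / log γ)
  calc P.real _
      ≤ ∑' k : ℕ, K * exp (-(F * X)) * exp (-(v * |log (3 / 4 * μ * t / σ) / log γ - k|)) :=
        measureReal_lt_iSup_le_tsum P A hmono henv (by positivity) (by linarith)
          hγ hγa ht hσ (hsum.mul_left _) fun k => by
            rw [mul_assoc K, ← hv, ← hZ]
            exact mul_le_mul_of_nonneg_left
              (exp_neg_half_sq_grid_le hσ (by positivity) ht hγ k) hK.le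
    _ = K * exp (-(F * X)) * ∑' k : ℕ, exp (-(v * |log (3 / 4 * μ * t / σ) / log γ - k|)) :=
        tsum_mul_left
    _ ≤ K * exp (-(F * X)) * (2 * exp (2 * v) / v) := by gcongr
    _ ≤ exp 1 * (4 ^ H * K * C / (H * (1 - H))) * exp (-X) :=
        weibull_constant_bound hH0 hH1 (by linarith) hX hK.le hFdef hvdef

theorem stmt_18 {Ω : Type*} [MeasurableSpace Ω] (P : Measure Ω) [IsProbabilityMeasure P]
    (A : ℝ → Ω → ℝ) (hmono : ∀ ω, Monotone fun t => A t ω)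
    (r K b H : ℝ) (hr : 0 ≤ r) (hK : 0 < K) (hb : 0 < b) (hH0 : 0 < H) (hH1 : H < 1)
    (henv : ∀ s t : ℝ, 0 ≤ s → s ≤ t → ∀ σ : ℝ, 0 < σ →
      (P {ω | A t ω - A s ω > r * (t - s) + σ * (t - s) ^ H}).toReal
        ≤ K * Real.exp (-(1 / 2) * (σ / b) ^ 2))
    (μ : ℝ) (hμ : 0 < μ) (t : ℝ) (ht : 0 ≤ t) (σ : ℝ) (hσ : 0 < σ) :
    (P {ω | σ < ⨆ s : Set.Icc (0 : ℝ) t,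
          (A t ω - A (s : ℝ) ω - (r + μ) * (t - (s : ℝ)))}).toReal
      ≤ (Real.exp 1 * max 1 ((4 : ℝ) ^ H * K * (r / μ + 2 - H) / (H * (1 - H)))) *
          Real.exp (-(σ / ((2 * b / μ ^ H) ^ ((1 : ℝ) / (1 - H)))) ^ (2 * (1 - H))) := by
  rw [div_rpow_one_div_rpow_two_mul hσ.le (by positivity) (by linarith), div_div_eq_mul_div]
  rcases le_or_gt ((σ ^ (1 - H) * μ ^ H / (2 * b)) ^ 2) 1 with hX | hX
  · calc (P _).toReal ≤ exp 1 * 1 * exp (-(σ ^ (1 - H) * μ ^ H / (2 * b)) ^ 2) := by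
          rw [mul_one, ← exp_add]; exact measureReal_le_one.trans (one_le_exp (by linarith))
      _ ≤ _ := by gcongr; exact le_max_left _ _
  rcases ht.eq_or_lt with rfl | ht
  · rw [show {ω | σ < ⨆ s : Icc (0 : ℝ) 0, (A 0 ω - A s ω - (r + μ) * (0 - s))} = ∅ from
      eq_empty_of_forall_notMem fun ω => not_lt_iSup_Icc_self (a := fun t => A t ω) hσ,
      measure_empty, ENNReal.toReal_zero]
    positivity
  calc (P _).toReal ≤ _ :=
        measureReal_lt_iSup_le_weibull P A hmono hr hK hH0 hH1 (fun s => henv s t) hμ ht hσ hX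
    _ ≤ _ := by gcongr; exact le_max_right _ _
end

section
/- (Gaussian tail integral step) For any nonincreasing nonnegative ε(x) = K·e^{−x²/2}, γ > 1, b > 0, H ∈ (0,1), and σ ≥ 0, the geometric-discretization sum is bounded by ∫_z^∞ ε(x)/x dx ≤ K·z^{−2}·e^{−z²/2} for z > 0; consequently ∑_{k=−∞}^∞ K·e^{−(1/2)((σ + b·x_k)/x_k^H /b')²} ≤ (K/(H(1−H)·log γ))·z^{−2}·e^{−z²/2} with z = b^H·σ^{1−H}/γ^{H(1−H)} (after rescaling by b'). -/
/-!
Since `-e^{-x²/2}` is a primitive of `x e^{-x²/2}` and `1/x ≤ x/z²` on `(z, ∞)`, the tail integral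
is at most `z⁻² e^{-z²/2}`.

For the sum put `x_k = τ γ^k`, `w_k = (σ + b x_k) / x_k^H / b'`, `Z = b^H σ^{1-H} / γ^{H(1-H)} / b'`
and `D = H (1 - H) log γ`. From `w_k ≥ σ x_k^{-H} / b'` and `w_k ≥ b x_k^{1-H} / b'`, the `k` with
`w_k ≤ t` have `log x_k` in an interval of length `log (t b' / (b^H σ^{1-H})) / (H (1 - H))`, so
there are at most `log (t / Z) / D` of them; the factor `γ^{H(1-H)}` in `Z` pays for the `+1` of
this lattice count. Hence the `n`-th smallest `w_k` is at least `Z e^{Dn}`, and for nonincreasing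
`ε` the sum of the `ε (w_k)` is at most `∑_{n ≥ 1} ε (Z e^{Dn}) ≤ D⁻¹ ∫_Z^∞ ε(x)/x dx`, since
`∫ dx/x = D` over each `[Z e^{D(n-1)}, Z e^{Dn}]`.
-/

open MeasureTheory Real Set Filter Finset

theorem hasDerivAt_neg_exp_neg_sq_div_two (x : ℝ) :
    HasDerivAt (fun x => -exp (-x ^ 2 / 2)) (x * exp (-x ^ 2 / 2)) x := by
  have h : HasDerivAt (fun x : ℝ => -x ^ 2 / 2) (-x) x :=
    ((hasDerivAt_pow 2 x).neg.div_const 2).congr_deriv (by ring)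
  exact h.exp.neg.congr_deriv (by ring)

theorem tendsto_neg_exp_neg_sq_div_two :
    Tendsto (fun x : ℝ => -exp (-x ^ 2 / 2)) atTop (nhds 0) := by
  have h : Tendsto (fun x : ℝ => -x ^ 2 / 2) atTop atBot :=
    (tendsto_neg_atTop_atBot.comp (tendsto_pow_atTop two_ne_zero)).atBot_div_const two_pos
  simpa using (tendsto_exp_atBot.comp h).neg

theorem integrableOn_Ioi_mul_exp_neg_sq_div_two {z : ℝ} (hz : 0 ≤ z) :
    IntegrableOn (fun x => x * exp (-x ^ 2 / 2)) (Ioi z) :=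
  integrableOn_Ioi_deriv_of_nonneg' (fun x _ => hasDerivAt_neg_exp_neg_sq_div_two x)
    (fun _ hx => mul_nonneg (hz.trans hx.le) (exp_pos _).le) tendsto_neg_exp_neg_sq_div_two

theorem integral_Ioi_mul_exp_neg_sq_div_two {z : ℝ} (hz : 0 ≤ z) :
    ∫ x in Ioi z, x * exp (-x ^ 2 / 2) = exp (-z ^ 2 / 2) := by
  simpa using integral_Ioi_of_hasDerivAt_of_nonneg'
    (fun x _ => hasDerivAt_neg_exp_neg_sq_div_two x)
    (fun _ hx => mul_nonneg (hz.trans hx.le) (exp_pos _).le) tendsto_neg_exp_neg_sq_div_two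

theorem exp_neg_sq_div_two_div_le {z x : ℝ} (hz : 0 < z) (hx : z ≤ x) :
    exp (-x ^ 2 / 2) / x ≤ (z ^ 2)⁻¹ * (x * exp (-x ^ 2 / 2)) := by
  have hx0 : 0 < x := hz.trans_le hx
  rw [div_le_iff₀ hx0, inv_mul_eq_div, div_mul_eq_mul_div, le_div_iff₀ (by positivity)]
  have : z ^ 2 ≤ x ^ 2 := pow_le_pow_left₀ hz.le hx 2
  nlinarith [exp_pos (-x ^ 2 / 2)]

theorem integrableOn_exp_neg_sq_div_two_div_self {z : ℝ} (hz : 0 < z) :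
    IntegrableOn (fun x => exp (-x ^ 2 / 2) / x) (Ioi z) := by
  refine ((integrableOn_Ioi_mul_exp_neg_sq_div_two hz.le).const_mul (z ^ 2)⁻¹).mono' ?_ ?_
  · exact ((continuous_exp.comp (by fun_prop)).continuousOn.div continuousOn_id
      fun x hx => (hz.trans hx).ne').aestronglyMeasurable measurableSet_Ioi
  · refine (ae_restrict_iff' measurableSet_Ioi).2 (ae_of_all _ fun x hx => ?_)
    rw [norm_of_nonneg (div_nonneg (exp_pos _).le (hz.trans hx).le)]
    exact exp_neg_sq_div_two_div_le hz hx.le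

theorem integral_exp_neg_sq_div_two_div_self_le {z : ℝ} (hz : 0 < z) :
    ∫ x in Ioi z, exp (-x ^ 2 / 2) / x ≤ (z ^ 2)⁻¹ * exp (-z ^ 2 / 2) :=
  calc ∫ x in Ioi z, exp (-x ^ 2 / 2) / x
      ≤ ∫ x in Ioi z, (z ^ 2)⁻¹ * (x * exp (-x ^ 2 / 2)) :=
        setIntegral_mono_on (integrableOn_exp_neg_sq_div_two_div_self hz)
          ((integrableOn_Ioi_mul_exp_neg_sq_div_two hz.le).const_mul _) measurableSet_Ioi
          fun _ hx => exp_neg_sq_div_two_div_le hz (le_of_lt hx)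
    _ = (z ^ 2)⁻¹ * exp (-z ^ 2 / 2) := by
        rw [integral_const_mul, integral_Ioi_mul_exp_neg_sq_div_two hz.le]

theorem integral_mul_exp_neg_sq_div_two_div_self_le {K z : ℝ} (hK : 0 ≤ K) (hz : 0 < z) :
    ∫ x in Ioi z, K * exp (-x ^ 2 / 2) / x ≤ K * z ^ (-(2 : ℝ)) * exp (-z ^ 2 / 2) := by
  simp_rw [mul_div_assoc]
  rw [integral_const_mul, rpow_neg hz.le, rpow_two, mul_assoc]
  exact mul_le_mul_of_nonneg_left (integral_exp_neg_sq_div_two_div_self_le hz) hK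

theorem antitoneOn_mul_exp_neg_sq_div_two {K : ℝ} (hK : 0 ≤ K) :
    AntitoneOn (fun x => K * exp (-x ^ 2 / 2)) (Ici 0) := fun x hx y _ hxy => by
  dsimp only
  gcongr

theorem sum_le_sum_range_of_rank_le {ι : Type*} [DecidableEq ι] (s : Finset ι) {w : ι → ℝ}
    {u : ℕ → ℝ} {ε : ℝ → ℝ} (hu : Monotone u) (hε : AntitoneOn ε (Ici (u 0)))
    (hrank : ∀ i ∈ s, u #{j ∈ s | w j ≤ w i} ≤ w i) :
    ∑ i ∈ s, ε (w i) ≤ ∑ n ∈ range #s, ε (u (n + 1)) := by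
  induction s using Finset.induction_on_max_value w with
  | empty => simp
  | insert a s ha hmax ih =>
    have hcard : #{j ∈ insert a s | w j ≤ w a} = #s + 1 := by
      rw [filter_true_of_mem fun j hj => ?_, card_insert_of_notMem ha]
      rcases mem_insert.1 hj with rfl | hj
      exacts [le_rfl, hmax j hj]
    have hua : u (#s + 1) ≤ w a := hcard ▸ hrank a (mem_insert_self a s)
    have hs : ∀ i ∈ s, u #{j ∈ s | w j ≤ w i} ≤ w i := fun i hi =>
      (hu (Finset.card_le_card (filter_subset_filter _ (subset_insert a s)))).trans
        (hrank i (mem_insert_of_mem hi))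
    rw [sum_insert ha, card_insert_of_notMem ha, sum_range_succ, add_comm]
    exact add_le_add (ih hs) (hε (hu (Nat.zero_le _)) ((hu (Nat.zero_le _)).trans hua) hua)

theorem sum_range_comp_mul_exp_le_integral_div {ε : ℝ → ℝ} {Z D : ℝ} (hZ : 0 < Z) (hD : 0 < D)
    (hε : AntitoneOn ε (Ici Z)) (hε0 : ∀ x ∈ Ioi Z, 0 ≤ ε x)
    (hint : IntegrableOn (fun x => ε x / x) (Ioi Z)) (N : ℕ) :
    ∑ n ∈ range N, ε (Z * exp (D * ↑(n + 1))) ≤ (∫ x in Ioi Z, ε x / x) / D := by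
  set a : ℕ → ℝ := fun n => Z * exp (D * n) with ha
  have hZa : ∀ n, Z ≤ a n := fun n =>
    le_mul_of_one_le_right hZ.le (one_le_exp (by positivity))
  have hstep : ∀ n, a n ≤ a (n + 1) := fun n => by
    simp only [ha]; gcongr; simp
  have hpiece : ∀ n, IntervalIntegrable (fun x => ε x / x) volume (a n) (a (n + 1)) := fun n =>
    (intervalIntegrable_iff_integrableOn_Ioc_of_le (hstep n)).2 <|
      hint.mono_set fun x hx => (hZa n).trans_lt hx.1
  have hcell : ∀ n, D * ε (a (n + 1)) ≤ ∫ x in a n..a (n + 1), ε x / x := fun n => by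
    have hpos : ∀ x ∈ Icc (a n) (a (n + 1)), 0 < x := fun x hx =>
      hZ.trans_le ((hZa n).trans hx.1)
    have hratio : a (n + 1) / a n = exp D := by
      simp only [ha]
      rw [mul_div_mul_left _ _ hZ.ne', ← exp_sub]
      push_cast
      ring_nf
    calc D * ε (a (n + 1)) = ∫ x in a n..a (n + 1), ε (a (n + 1)) / x := by
          simp_rw [div_eq_mul_inv]
          rw [intervalIntegral.integral_const_mul, integral_inv_of_pos (hZ.trans_le (hZa n))
            (hZ.trans_le (hZa _)), hratio, log_exp, mul_comm]
      _ ≤ ∫ x in a n..a (n + 1), ε x / x := by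
          refine intervalIntegral.integral_mono_on (hstep n) ?_ (hpiece n) fun x hx => ?_
          · exact (continuousOn_const.div continuousOn_id fun x hx =>
              (hpos x (by rwa [uIcc_of_le (hstep n)] at hx)).ne').intervalIntegrable
          · exact div_le_div_of_nonneg_right (hε ((hZa n).trans hx.1) (hZa _) hx.2)
              (hpos x hx).le
  rw [le_div_iff₀ hD, sum_mul]
  calc ∑ n ∈ range N, ε (Z * exp (D * ↑(n + 1))) * D
      ≤ ∑ n ∈ range N, ∫ x in a n..a (n + 1), ε x / x :=
        sum_le_sum fun n _ => by rw [mul_comm]; exact hcell n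
    _ = ∫ x in Ioc Z (a N), ε x / x := by
        have ha0 : a 0 = Z := by simp [ha]
        rw [intervalIntegral.sum_integral_adjacent_intervals fun n _ => hpiece n, ha0,
          intervalIntegral.integral_of_le (hZa N)]
    _ ≤ ∫ x in Ioi Z, ε x / x :=
        setIntegral_mono_set hint
          ((ae_restrict_iff' measurableSet_Ioi).2 (ae_of_all _ fun x hx =>
            div_nonneg (hε0 x hx) (hZ.trans hx).le))
          Ioc_subset_Ioi_self.eventuallyLE

theorem card_le_div_add_one_of_forall_mem_Icc {s : Finset ℤ} (hs : s.Nonempty) {c L α β : ℝ}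
    (hL : 0 < L) (h : ∀ k ∈ s, c + k * L ∈ Icc α β) : (#s : ℝ) ≤ (β - α) / L + 1 := by
  set m := s.min' hs
  set M := s.max' hs
  have hcard : (#s : ℤ) ≤ M + 1 - m := by
    have hsub : s ⊆ Finset.Icc m M := fun k hk =>
      Finset.mem_Icc.2 ⟨s.min'_le k hk, s.le_max' k hk⟩
    have := Finset.card_le_card hsub
    have hmM : m ≤ M := s.min'_le M (s.max'_mem hs)
    rw [Int.card_Icc] at this
    omega
  have hspan : (M - m : ℝ) ≤ (β - α) / L := by
    rw [le_div_iff₀ hL]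
    linarith [(h m (s.min'_mem hs)).1, (h M (s.max'_mem hs)).2]
  have : (#s : ℝ) ≤ M + 1 - m := by exact_mod_cast hcard
  linarith

theorem log_mem_Icc_of_div_rpow_le {σ b b' H x t : ℝ} (hσ : 0 < σ) (hb : 0 < b) (hb' : 0 < b')
    (hH0 : 0 < H) (hH1 : H < 1) (hx : 0 < x) (ht : (σ + b * x) / x ^ H / b' ≤ t) :
    log x ∈ Icc ((log σ - log (t * b')) / H) ((log (t * b') - log b) / (1 - H)) := by
  have hxH : 0 < x ^ H := rpow_pos_of_pos hx H
  have htb : σ / x ^ H + b * x ^ (1 - H) ≤ t * b' := by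
    rwa [rpow_sub hx, rpow_one, ← mul_div_assoc, ← add_div, ← div_le_iff₀ hb']
  have hσt : σ / x ^ H ≤ t * b' := by nlinarith [rpow_pos_of_pos hx (1 - H)]
  have hbt : b * x ^ (1 - H) ≤ t * b' := by nlinarith [div_pos hσ hxH]
  have htb0 : 0 < t * b' := (div_pos hσ hxH).trans_le hσt
  have hlogσ := log_le_log (div_pos hσ hxH) hσt
  have hlogb := log_le_log (by positivity) hbt
  rw [log_div hσ.ne' hxH.ne', log_rpow hx] at hlogσ
  rw [log_mul hb.ne' (rpow_pos_of_pos hx _).ne', log_rpow hx] at hlogb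
  constructor
  · rw [div_le_iff₀ hH0]; linarith
  · rw [le_div_iff₀ (sub_pos.2 hH1)]; linarith

theorem exp_mul_card_filter_le {σ b b' τ γ H : ℝ} (hσ : 0 < σ) (hb : 0 < b) (hb' : 0 < b')
    (hτ : 0 < τ) (hγ : 1 < γ) (hH0 : 0 < H) (hH1 : H < 1) (s : Finset ℤ) {i : ℤ} (hi : i ∈ s) :
    let w : ℤ → ℝ := fun k => (σ + b * (τ * γ ^ k)) / (τ * γ ^ k) ^ H / b'
    b ^ H * σ ^ (1 - H) / γ ^ (H * (1 - H)) / b' *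
        exp (H * (1 - H) * log γ * #{j ∈ s | w j ≤ w i}) ≤ w i := by
  intro w
  have hγ0 : 0 < γ := by linarith
  have hx : ∀ k : ℤ, 0 < τ * γ ^ k := fun k => by positivity
  have hlogx : ∀ k : ℤ, log (τ * γ ^ k) = log τ + k * log γ := fun k => by
    rw [log_mul hτ.ne' (zpow_pos hγ0 k).ne', log_zpow]
  have hL : 0 < log γ := log_pos hγ
  have h1H : 0 < 1 - H := sub_pos.2 hH1
  have hwi : 0 < w i := by have := hx i; positivity
  have hlogZ : log (b ^ H * σ ^ (1 - H) / γ ^ (H * (1 - H)) / b') =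
      H * log b + (1 - H) * log σ - H * (1 - H) * log γ - log b' := by
    rw [log_div, log_div, log_mul, log_rpow hb, log_rpow hσ, log_rpow hγ0] <;> positivity
  have hcard := card_le_div_add_one_of_forall_mem_Icc (s := {j ∈ s | w j ≤ w i})
    ⟨i, by simp [hi]⟩ hL fun k hk => hlogx k ▸
      log_mem_Icc_of_div_rpow_le hσ hb hb' hH0 hH1 (hx k) (mem_filter.1 hk).2
  rw [log_mul hwi.ne' hb'.ne'] at hcard
  rw [← exp_log (by positivity : 0 < b ^ H * σ ^ (1 - H) / γ ^ (H * (1 - H)) / b'), ← exp_add,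
    ← le_log_iff_exp_le hwi, hlogZ]
  calc H * log b + (1 - H) * log σ - H * (1 - H) * log γ - log b' +
        H * (1 - H) * log γ * #{j ∈ s | w j ≤ w i}
      ≤ H * log b + (1 - H) * log σ - H * (1 - H) * log γ - log b' + H * (1 - H) * log γ *
        (((log (w i) + log b' - log b) / (1 - H) - (log σ - (log (w i) + log b')) / H) /
          log γ + 1) := by
        gcongr
    _ = log (w i) := by
        field_simp
        ring

theorem tsum_comp_div_rpow_le_integral_div {σ b b' τ γ H : ℝ} (hσ : 0 < σ) (hb : 0 < b)
    (hb' : 0 < b') (hτ : 0 < τ) (hγ : 1 < γ) (hH0 : 0 < H) (hH1 : H < 1) {ε : ℝ → ℝ}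
    (hε : AntitoneOn ε (Ici (b ^ H * σ ^ (1 - H) / γ ^ (H * (1 - H)) / b')))
    (hε0 : ∀ x ∈ Ioi (b ^ H * σ ^ (1 - H) / γ ^ (H * (1 - H)) / b'), 0 ≤ ε x)
    (hint : IntegrableOn (fun x => ε x / x)
      (Ioi (b ^ H * σ ^ (1 - H) / γ ^ (H * (1 - H)) / b'))) :
    ∑' k : ℤ, ε ((σ + b * (τ * γ ^ k)) / (τ * γ ^ k) ^ H / b') ≤
      (∫ x in Ioi (b ^ H * σ ^ (1 - H) / γ ^ (H * (1 - H)) / b'), ε x / x) /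
        (H * (1 - H) * log γ) := by
  have hZ : 0 < b ^ H * σ ^ (1 - H) / γ ^ (H * (1 - H)) / b' := by
    have : 0 < γ := by linarith
    positivity
  have hD : 0 < H * (1 - H) * log γ := mul_pos (mul_pos hH0 (sub_pos.2 hH1)) (log_pos hγ)
  refine tsum_le_of_sum_le' (div_nonneg (setIntegral_nonneg measurableSet_Ioi fun x hx =>
    div_nonneg (hε0 x hx) (hZ.trans hx).le) hD.le) fun s => ?_
  have hu : Monotone fun n : ℕ => b ^ H * σ ^ (1 - H) / γ ^ (H * (1 - H)) / b' *
      exp (H * (1 - H) * log γ * n) := fun m n hmn => by dsimp only; gcongr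
  exact (sum_le_sum_range_of_rank_le s hu (by simpa using hε)
    fun i hi => exp_mul_card_filter_le hσ hb hb' hτ hγ hH0 hH1 s hi).trans
    (sum_range_comp_mul_exp_le_integral_div hZ hD hε hε0 hint _)

theorem not_summable_exp_neg_sq_div_rpow {K b b' τ γ H : ℝ} (hK : 0 < K) (hb : 0 ≤ b)
    (hb' : 0 ≤ b') (hτ : 0 < τ) (hγ : 1 < γ) (hH1 : H < 1) :
    ¬ Summable fun k : ℤ =>
      K * exp (-(1 / 2) * ((0 + b * (τ * γ ^ k)) / (τ * γ ^ k) ^ H / b') ^ 2) := by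
  intro hs
  have hbound : ∀ n : ℕ, K * exp (-(1 / 2) * (b * τ ^ (1 - H) / b') ^ 2) ≤ K * exp (-(1 / 2) *
      ((0 + b * (τ * γ ^ (-(n : ℤ)))) / (τ * γ ^ (-(n : ℤ))) ^ H / b') ^ 2) := fun n => by
    have hx : 0 < τ * γ ^ (-(n : ℤ)) := mul_pos hτ (zpow_pos (by linarith) _)
    have hxτ : τ * γ ^ (-(n : ℤ)) ≤ τ :=
      mul_le_of_le_one_right hτ.le (zpow_le_one_of_nonpos₀ hγ.le (by omega))
    rw [zero_add, mul_div_assoc b (τ * _), ← rpow_one_sub' hx.le (sub_pos.2 hH1).ne',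
      neg_mul, neg_mul]
    gcongr
  have hlim := (hs.comp_injective (neg_injective.comp Nat.cast_injective)).tendsto_atTop_zero
  exact (ge_of_tendsto' hlim hbound).not_gt (by positivity)

theorem stmt_19 (K γ b b' τ H σ : ℝ) (hK : 0 ≤ K) (hγ : 1 < γ) (hb : 0 < b) (hb' : 0 < b')
    (hτ : 0 < τ) (hH0 : 0 < H) (hH1 : H < 1) (hσ : 0 ≤ σ) :
    (∀ z : ℝ, 0 < z →
      (∫ x in Set.Ioi z, (K * Real.exp (-x ^ 2 / 2)) / x)
        ≤ K * z ^ (-(2 : ℝ)) * Real.exp (-z ^ 2 / 2)) ∧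
    (∑' k : ℤ, K * Real.exp (-(1 / 2) *
          ((σ + b * (τ * γ ^ k)) / (τ * γ ^ k) ^ H / b') ^ 2)
      ≤ (K / (H * (1 - H) * Real.log γ)) *
          (b ^ H * σ ^ (1 - H) / γ ^ (H * (1 - H)) / b') ^ (-(2 : ℝ)) *
          Real.exp (-(b ^ H * σ ^ (1 - H) / γ ^ (H * (1 - H)) / b') ^ 2 / 2)) := by
  refine ⟨fun z hz => integral_mul_exp_neg_sq_div_two_div_self_le hK hz, ?_⟩
  rcases hσ.eq_or_lt with rfl | hσ
  -- For σ = 0 the bound reads `≤ 0` (as `0 ^ (-2 : ℝ) = 0`) and holds because the series diverges.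
  · rw [zero_rpow (sub_pos.2 hH1).ne', mul_zero, zero_div, zero_div,
      zero_rpow (by norm_num), mul_zero, zero_mul]
    rcases hK.eq_or_lt with rfl | hK
    · simp
    · exact (tsum_eq_zero_of_not_summable
        (not_summable_exp_neg_sq_div_rpow hK hb.le hb'.le hτ hγ hH1)).le
  set Z := b ^ H * σ ^ (1 - H) / γ ^ (H * (1 - H)) / b'
  have hZ : 0 < Z := by
    have : 0 < γ := by linarith
    positivity
  have hint : IntegrableOn (fun x => K * exp (-x ^ 2 / 2) / x) (Ioi Z) := by
    simp_rw [mul_div_assoc]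
    exact (integrableOn_exp_neg_sq_div_two_div_self hZ).const_mul K
  calc ∑' k : ℤ, K * exp (-(1 / 2) * ((σ + b * (τ * γ ^ k)) / (τ * γ ^ k) ^ H / b') ^ 2)
      = ∑' k : ℤ, K * exp (-((σ + b * (τ * γ ^ k)) / (τ * γ ^ k) ^ H / b') ^ 2 / 2) := by
        congr! 4; ring
    _ ≤ (∫ x in Ioi Z, K * exp (-x ^ 2 / 2) / x) / (H * (1 - H) * log γ) :=
        tsum_comp_div_rpow_le_integral_div hσ hb hb' hτ hγ hH0 hH1
          ((antitoneOn_mul_exp_neg_sq_div_two hK).mono (Ici_subset_Ici.2 hZ.le))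
          (fun x _ => by positivity) hint
    _ ≤ K * Z ^ (-(2 : ℝ)) * exp (-Z ^ 2 / 2) / (H * (1 - H) * log γ) := by
        have := sub_pos.2 hH1
        have := log_pos hγ
        gcongr
        exact integral_mul_exp_neg_sq_div_two_div_self_le hK hZ
    _ = K / (H * (1 - H) * log γ) * Z ^ (-(2 : ℝ)) * exp (-Z ^ 2 / 2) := by ring
end
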